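/- arXiv:1810.08193 — 7 statements merged into one kernel-verified Lean document; each statement's English description precedes it below -/
import Mathlib

section
/- Fix λ ≥ 1 and κ ≥ 0. Let f : (0,∞) → ℝ be a continuously differentiable, strictly increasing function with f(t) → +∞ as t → +∞, and let M : (0,∞) → [0,∞) be a nondecreasing function. Suppose there exists r₀ > 0 such that ∫₀^{r₀} (M(r)/r²)·f′(1/r) dr < ∞. Then for every ε > 0 there exist real numbers a′ < b′ such that: for every t ≤ a′ and every t ≥ b′ the number |t|/(2λ) − κ/2 lies in the range of f, and ∫_{−∞}^{a′} M( 1 / f⁻¹( |t|/(2λ) − κ/2 ) ) dt < ε and ∫_{b′}^{+∞} M( 1 / f⁻¹( t/(2λ) − κ/2 ) ) dt < ε, where f⁻¹ denotes the inverse of f on its range. -/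
open MeasureTheory

private lemma tail_tendsto_zero' {F : ℝ → ℝ} {b₀ : ℝ} (h : IntegrableOn F (Set.Ioi b₀)) :
    Filter.Tendsto (fun b => ∫ t in Set.Ioi b, F t) Filter.atTop (nhds 0) := by
  have key := MeasureTheory.intervalIntegral_tendsto_integral_Ioi b₀ h Filter.tendsto_id
  have h0 : Filter.Tendsto (fun b => (∫ t in Set.Ioi b₀, F t) - ∫ t in b₀..b, F t)
      Filter.atTop (nhds 0) := by
    simpa using (tendsto_const_nhds (x := ∫ t in Set.Ioi b₀, F t)).sub key
  refine h0.congr' ?_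
  filter_upwards [Filter.eventually_ge_atTop b₀] with b hb
  have hu : Set.Ioc b₀ b ∪ Set.Ioi b = Set.Ioi b₀ := Set.Ioc_union_Ioi_eq_Ioi hb
  have hsum := MeasureTheory.setIntegral_union (Set.Ioc_disjoint_Ioi_same) measurableSet_Ioi
    (h.mono_set (by rw [← hu]; exact Set.subset_union_left))
    (h.mono_set (by rw [← hu]; exact Set.subset_union_right)) (f := F)
  rw [hu] at hsum
  rw [intervalIntegral.integral_of_le hb]
  linarith


/-- Lemma 5.1 of the paper. Fix `λ ≥ 1`, `κ ≥ 0`. Let `f` be a `C¹`,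
strictly increasing function on `(0,∞)` with `f(t) → +∞` as `t → +∞`, and let
`M : (0,∞) → [0,∞)` be nondecreasing. If `∫₀^{r₀} (M(r)/r²)·f′(1/r) dr < ∞` for some
`r₀ > 0`, then for every `ε > 0` there exist `a′ < b′` such that `|t|/(2λ) − κ/2` lies in
the range of `f` (on `(0,∞)`) for `t ≤ a′` and for `t ≥ b′`, and the integrals
`∫_{−∞}^{a′} M(1/f⁻¹(|t|/(2λ) − κ/2)) dt` and `∫_{b′}^{∞} M(1/f⁻¹(t/(2λ) − κ/2)) dt`
are finite and `< ε`. Here `g` is the inverse of `f` on its range. -/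
theorem cntrl_MOmega_lemma (lam κ : ℝ) (hlam : 1 ≤ lam) (hκ : 0 ≤ κ)
    (f M : ℝ → ℝ)
    (hf_diff : ContDiffOn ℝ 1 f (Set.Ioi 0))
    (hf_mono : StrictMonoOn f (Set.Ioi 0))
    (hf_tendsto : Filter.Tendsto f Filter.atTop Filter.atTop)
    (hM_nonneg : ∀ r > 0, 0 ≤ M r)
    (hM_mono : MonotoneOn M (Set.Ioi 0))
    (g : ℝ → ℝ) (hg : ∀ x > 0, g (f x) = x)
    (r₀ : ℝ) (hr₀ : 0 < r₀)
    (hint : IntegrableOn (fun r => M r / r ^ 2 * deriv f (1 / r)) (Set.Ioo 0 r₀)) :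
    ∀ ε > 0, ∃ a' b' : ℝ, a' < b' ∧
      (∀ t ≤ a', |t| / (2 * lam) - κ / 2 ∈ f '' Set.Ioi 0) ∧
      (∀ t ≥ b', |t| / (2 * lam) - κ / 2 ∈ f '' Set.Ioi 0) ∧
      IntegrableOn (fun t => M (1 / g (|t| / (2 * lam) - κ / 2))) (Set.Iic a') ∧
      (∫ t in Set.Iic a', M (1 / g (|t| / (2 * lam) - κ / 2))) < ε ∧
      IntegrableOn (fun t => M (1 / g (t / (2 * lam) - κ / 2))) (Set.Ici b') ∧
      (∫ t in Set.Ici b', M (1 / g (t / (2 * lam) - κ / 2))) < ε := by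
  set c : ℝ := 1 / r₀ with hc_def
  have hc : 0 < c := by positivity
  have hlam2 : (0:ℝ) < 2 * lam := by linarith
  -- Step A: change of variables r = 1/x
  have himg1 : (fun r : ℝ => 1 / r) '' Set.Ioo 0 r₀ = Set.Ioi c := by
    ext y
    constructor
    · rintro ⟨r, ⟨hr0, hrr⟩, rfl⟩
      exact Set.mem_Ioi.mpr (one_div_lt_one_div_of_lt hr0 hrr)
    · intro hy
      have hy0 : 0 < y := hc.trans hy
      refine ⟨1 / y, ⟨by positivity, ?_⟩, one_div_one_div y⟩
      have := one_div_lt_one_div_of_lt hc hy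
      rwa [hc_def, one_div_one_div] at this
  have hderiv1 : ∀ r ∈ Set.Ioo 0 r₀,
      HasDerivWithinAt (fun r : ℝ => 1 / r) (-(r ^ 2)⁻¹) (Set.Ioo 0 r₀) r := by
    intro r hr
    exact ((hasDerivAt_inv (ne_of_gt hr.1)).hasDerivWithinAt).congr
      (fun y _ => one_div y) (one_div r)
  have hinj1 : Set.InjOn (fun r : ℝ => 1 / r) (Set.Ioo 0 r₀) := by
    intro a _ b _ hab
    simp only at hab
    rw [← one_div_one_div a, hab, one_div_one_div]
  have hfderivAt : ∀ x : ℝ, 0 < x → HasDerivAt f (deriv f x) x := by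
    intro x hx
    exact ((hf_diff.differentiableOn one_ne_zero).differentiableAt
      (isOpen_Ioi.mem_nhds hx)).hasDerivAt
  have hA : IntegrableOn (fun x => M (1 / x) * deriv f x) (Set.Ioi c) := by
    rw [← himg1, MeasureTheory.integrableOn_image_iff_integrableOn_abs_deriv_smul
      measurableSet_Ioo hderiv1 hinj1]
    refine hint.congr_fun ?_ measurableSet_Ioo
    intro r hr
    have hr0 : 0 < r := hr.1
    have hr2 : (0:ℝ) < r ^ 2 := by positivity
    simp only [one_div_one_div, smul_eq_mul, abs_neg, abs_inv, abs_of_pos hr2]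
    field_simp
  -- Step B: change of variables s = f x
  have hfderiv : ∀ x ∈ Set.Ioi c, HasDerivWithinAt f (deriv f x) (Set.Ioi c) x :=
    fun x hx => (hfderivAt x (hc.trans hx)).hasDerivWithinAt
  have hfinj : Set.InjOn f (Set.Ioi c) :=
    hf_mono.injOn.mono (Set.Ioi_subset_Ioi hc.le)
  have hB : IntegrableOn (fun s => M (1 / g s)) (f '' Set.Ioi c) := by
    rw [MeasureTheory.integrableOn_image_iff_integrableOn_abs_deriv_smul
      measurableSet_Ioi hfderiv hfinj]
    have habs : IntegrableOn (fun x => |M (1 / x) * deriv f x|) (Set.Ioi c) := hA.abs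
    refine habs.congr_fun ?_ measurableSet_Ioi
    intro x hx
    have hx0 : 0 < x := hc.trans hx
    have hM0 : 0 ≤ M (1 / x) := hM_nonneg _ (by positivity)
    simp only [smul_eq_mul]
    rw [hg x hx0, abs_mul, abs_of_nonneg hM0, mul_comm]
  -- Step C: the image contains a half-line [s₀, ∞)
  set s₀ : ℝ := f (c + 1) with hs₀_def
  have hIVT : Set.Ici s₀ ⊆ f '' Set.Ioi c := by
    intro y hy
    obtain ⟨X, hX⟩ := (hf_tendsto.eventually_ge_atTop y).exists_forall_of_atTop
    set X' := max X (c + 1) with hX'_def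
    have h1 : c + 1 ≤ X' := le_max_right _ _
    have hcont : ContinuousOn f (Set.Icc (c + 1) X') := by
      refine hf_diff.continuousOn.mono ?_
      intro z hz
      have : c + 1 ≤ z := hz.1
      exact Set.mem_Ioi.mpr (by linarith)
    have hy' : y ∈ Set.Icc (f (c + 1)) (f X') :=
      ⟨hy, hX X' (le_max_left _ _)⟩
    obtain ⟨x, hx, hfx⟩ := intermediate_value_Icc h1 hcont hy'
    exact ⟨x, Set.mem_Ioi.mpr (by have := hx.1; linarith), hfx⟩
  have hC : IntegrableOn (fun s => M (1 / g s)) (Set.Ici s₀) := hB.mono_set hIVT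
  -- Step D: affine change of variables
  set b₀ : ℝ := 2 * lam * (s₀ + κ / 2) with hb₀_def
  set F : ℝ → ℝ := fun t => M (1 / g (t / (2 * lam) - κ / 2)) with hF_def
  have hb₀div : b₀ / (2 * lam) = s₀ + κ / 2 := by
    rw [hb₀_def]; field_simp
  have himg2 : (fun t : ℝ => t / (2 * lam) - κ / 2) '' Set.Ici b₀ = Set.Ici s₀ := by
    ext y
    constructor
    · rintro ⟨t, ht, rfl⟩
      have : b₀ / (2 * lam) ≤ t / (2 * lam) := by gcongr; exact ht
      rw [hb₀div] at this
      exact Set.mem_Ici.mpr (by linarith)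
    · intro hy
      refine ⟨2 * lam * (y + κ / 2), ?_, ?_⟩
      · rw [Set.mem_Ici, hb₀_def]
        have : s₀ + κ / 2 ≤ y + κ / 2 := by have := Set.mem_Ici.mp hy; linarith
        nlinarith
      · field_simp; ring
  have hderiv2 : ∀ t ∈ Set.Ici b₀,
      HasDerivWithinAt (fun t : ℝ => t / (2 * lam) - κ / 2) (1 / (2 * lam)) (Set.Ici b₀) t := by
    intro t _
    simpa using (((hasDerivAt_id t).div_const (2 * lam)).sub_const (κ / 2)).hasDerivWithinAt
  have hinj2 : Set.InjOn (fun t : ℝ => t / (2 * lam) - κ / 2) (Set.Ici b₀) := by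
    intro a _ b _ hab
    have h2 : (2 * lam) ≠ 0 := ne_of_gt hlam2
    field_simp at hab
    linarith
  have hD : IntegrableOn F (Set.Ici b₀) := by
    have h1 := (MeasureTheory.integrableOn_image_iff_integrableOn_abs_deriv_smul
      measurableSet_Ici hderiv2 hinj2 (fun s => M (1 / g s))).mp (by rw [himg2]; exact hC)
    have h2 := h1.const_mul (2 * lam)
    refine MeasureTheory.IntegrableOn.congr_fun h2 ?_ measurableSet_Ici
    intro t _
    simp only [smul_eq_mul, hF_def, abs_of_pos (show (0:ℝ) < 1 / (2 * lam) by positivity)]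
    field_simp
  -- membership helper
  have hmem : ∀ u : ℝ, b₀ ≤ u → u / (2 * lam) - κ / 2 ∈ f '' Set.Ioi 0 := by
    intro u hu
    have h1 : b₀ / (2 * lam) ≤ u / (2 * lam) := by gcongr
    rw [hb₀div] at h1
    have h2 : u / (2 * lam) - κ / 2 ∈ Set.Ici s₀ := Set.mem_Ici.mpr (by linarith)
    exact (Set.image_mono (Set.Ioi_subset_Ioi hc.le)) (hIVT h2)
  -- choose b'
  intro ε hε
  have htail := tail_tendsto_zero' (hD.mono_set Set.Ioi_subset_Ici_self)
  obtain ⟨b', hb'1, hb'2⟩ :=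
    ((htail.eventually (gt_mem_nhds hε)).and
      (Filter.eventually_ge_atTop (max b₀ 1))).exists
  have hb'b₀ : b₀ ≤ b' := le_trans (le_max_left _ _) hb'2
  have hb'1' : (1:ℝ) ≤ b' := le_trans (le_max_right _ _) hb'2
  refine ⟨-b', b', by linarith, ?_, ?_, ?_, ?_, ?_, ?_⟩
  · -- membership left
    intro t ht
    have h0 : t ≤ 0 := by linarith
    have : b₀ ≤ |t| := by rw [abs_of_nonpos h0]; linarith
    exact hmem _ this
  · -- membership right
    intro t ht
    have : b₀ ≤ |t| := by rw [abs_of_nonneg (by linarith : (0:ℝ) ≤ t)]; linarith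
    exact hmem _ this
  all_goals {
    have hnegimg : (fun t : ℝ => -t) '' Set.Iic (-b') = Set.Ici b' := by
      ext y
      constructor
      · rintro ⟨t, ht, rfl⟩
        have := Set.mem_Iic.mp ht
        refine Set.mem_Ici.mpr ?_
        simp only
        linarith
      · intro hy
        have := Set.mem_Ici.mp hy
        exact ⟨-y, Set.mem_Iic.mpr (by linarith), by ring⟩
    have hnegderiv : ∀ t ∈ Set.Iic (-b'),
        HasDerivWithinAt (fun t : ℝ => -t) (-1) (Set.Iic (-b')) t :=
      fun t _ => (hasDerivAt_neg t).hasDerivWithinAt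
    have hneginj : Set.InjOn (fun t : ℝ => -t) (Set.Iic (-b')) :=
      fun a _ b _ h => neg_injective h
    have hDb' : IntegrableOn F (Set.Ici b') := hD.mono_set (Set.Ici_subset_Ici.mpr hb'b₀)
    have hIL0 : IntegrableOn (fun t => |(-1 : ℝ)| • F (-t)) (Set.Iic (-b')) := by
      rw [← MeasureTheory.integrableOn_image_iff_integrableOn_abs_deriv_smul
        measurableSet_Iic hnegderiv hneginj F, hnegimg]
      exact hDb'
    have heqon : Set.EqOn (fun t => |(-1 : ℝ)| • F (-t))
        (fun t => M (1 / g (|t| / (2 * lam) - κ / 2))) (Set.Iic (-b')) := by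
      intro t ht
      have h0 : t ≤ 0 := le_trans (Set.mem_Iic.mp ht) (by linarith)
      simp only [hF_def, abs_neg, abs_one, one_smul, abs_of_nonpos h0]
    first
    | exact hIL0.congr_fun heqon measurableSet_Iic
    | { -- left integral
        have hIeq : ∫ t in Set.Ici b', F t = ∫ t in Set.Iic (-b'), |(-1 : ℝ)| • F (-t) := by
          rw [← hnegimg]
          exact MeasureTheory.integral_image_eq_integral_abs_deriv_smul
            measurableSet_Iic hnegderiv hneginj F
        calc (∫ t in Set.Iic (-b'), M (1 / g (|t| / (2 * lam) - κ / 2)))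
            = ∫ t in Set.Iic (-b'), |(-1 : ℝ)| • F (-t) :=
              (MeasureTheory.setIntegral_congr_fun measurableSet_Iic heqon).symm
          _ = ∫ t in Set.Ici b', F t := hIeq.symm
          _ = ∫ t in Set.Ioi b', F t := MeasureTheory.integral_Ici_eq_integral_Ioi
          _ < ε := hb'1 }
    | exact hDb'
    | { rw [show (∫ t in Set.Ici b', M (1 / g (t / (2 * lam) - κ / 2)))
            = ∫ t in Set.Ioi b', F t from MeasureTheory.integral_Ici_eq_integral_Ioi]
        exact hb'1 }
  }
end

section
/- Let α > 1 and let 0 < c₁ ≤ c₂. Then there exist ε > 0 and constants 0 < C₁ ≤ C₂ such that for every x ∈ (0,ε] and every y with c₁x² ≤ y ≤ c₂x², the principal power w := (x+iy)^α satisfies C₁·x^{1+α} ≤ Im w ≤ C₂·x^{1+α} and |Re w − x^α| ≤ C₂·x^{2+α}. -/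
set_option maxHeartbeats 1000000

open Real

private lemma aux_exp_le {s : ℝ} (h0 : 0 ≤ s) (h1 : s ≤ 1) : Real.exp s ≤ 1 + 2 * s := by
  have h := Real.exp_bound (x := s) (by rwa [abs_of_nonneg h0]) (n := 1) one_pos
  simp [Finset.sum_range_one] at h
  have := abs_le.1 h
  rw [abs_of_nonneg h0] at this
  linarith [this.2]

private lemma aux_rpow_le {s β : ℝ} (hs : 0 ≤ s) (hβ : 0 < β) (h : β * s ≤ 1) :
    (1 + s) ^ β ≤ 1 + 2 * (β * s) := by
  have h1s : (0:ℝ) < 1 + s := by linarith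
  have hlog : Real.log (1 + s) ≤ s := by
    have := Real.log_le_sub_one_of_pos h1s
    linarith
  have heq : (1 + s) ^ β = Real.exp (Real.log (1 + s) * β) := Real.rpow_def_of_pos h1s β
  rw [heq]
  have h2 : Real.log (1 + s) * β ≤ s * β := mul_le_mul_of_nonneg_right hlog hβ.le
  have h3 : Real.exp (Real.log (1 + s) * β) ≤ Real.exp (s * β) := Real.exp_le_exp.2 h2
  have h4 : Real.exp (s * β) ≤ 1 + 2 * (s * β) := by
    apply aux_exp_le (by positivity)
    linarith [mul_comm s β]
  calc Real.exp (Real.log (1 + s) * β) ≤ Real.exp (s * β) := h3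
    _ ≤ 1 + 2 * (s * β) := h4
    _ = 1 + 2 * (β * s) := by ring

private lemma aux_sin_ge {u : ℝ} (h0 : 0 ≤ u) (h1 : u ≤ 1) : 3 / 4 * u ≤ Real.sin u := by
  rcases eq_or_lt_of_le h0 with h | h
  · simp [← h]
  · have := Real.sin_gt_sub_cube h
    nlinarith [pow_le_one₀ h0 h1 (n := 2)]

/-- Let `α > 1` and `0 < c₁ ≤ c₂`. Then there exist `ε > 0` and
`0 < C₁ ≤ C₂` such that for every `x ∈ (0,ε]` and every `y` with `c₁x² ≤ y ≤ c₂x²`,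
the principal power `w = (x+iy)^α` satisfies `C₁·x^{1+α} ≤ Im w ≤ C₂·x^{1+α}` and
`|Re w − x^α| ≤ C₂·x^{2+α}`. -/
theorem cpow_of_quadratic_cusp (α c₁ c₂ : ℝ) (hα : 1 < α) (hc₁ : 0 < c₁) (hc : c₁ ≤ c₂) :
    ∃ ε > 0, ∃ C₁ C₂ : ℝ, 0 < C₁ ∧ C₁ ≤ C₂ ∧
      ∀ x ∈ Set.Ioc (0 : ℝ) ε, ∀ y : ℝ, c₁ * x ^ 2 ≤ y → y ≤ c₂ * x ^ 2 →
        C₁ * x ^ (1 + α) ≤ (((x : ℂ) + (y : ℂ) * Complex.I) ^ (α : ℂ)).im ∧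
        (((x : ℂ) + (y : ℂ) * Complex.I) ^ (α : ℂ)).im ≤ C₂ * x ^ (1 + α) ∧
        |(((x : ℂ) + (y : ℂ) * Complex.I) ^ (α : ℂ)).re - x ^ α| ≤ C₂ * x ^ (2 + α) := by
  have hα0 : (0:ℝ) < α := by linarith
  have hc₂ : (0:ℝ) < c₂ := lt_of_lt_of_le hc₁ hc
  set ε : ℝ := (2 * α * c₂)⁻¹ with hεdef
  have hε0 : 0 < ε := by positivity
  have hεc₂ : α * (c₂ * ε) = 1 / 2 := by
    rw [hεdef]; field_simp
  set C₁ : ℝ := 3 / 8 * α * c₁ with hC₁def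
  set C₂ : ℝ := C₁ + Real.sqrt 2 ^ α * (4 / 3 * α * c₂) + (α * c₂ ^ 2 + α ^ 2 * c₂ ^ 2)
    with hC₂def
  have hC₁0 : 0 < C₁ := by positivity
  have hC₁₂ : C₁ ≤ C₂ := by
    have h1 : 0 ≤ Real.sqrt 2 ^ α * (4 / 3 * α * c₂) := by positivity
    have h2 : 0 ≤ α * c₂ ^ 2 + α ^ 2 * c₂ ^ 2 := by positivity
    rw [hC₂def]; linarith
  refine ⟨ε, hε0, C₁, C₂, hC₁0, hC₁₂, ?_⟩
  rintro x ⟨hx0, hxε⟩ y hy1 hy2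
  clear_value ε C₁ C₂
  -- basic smallness facts
  have hc₂x0 : 0 < c₂ * x := by positivity
  have hc₂x : α * (c₂ * x) ≤ 1 / 2 := by
    have h1 : c₂ * x ≤ c₂ * ε := mul_le_mul_of_nonneg_left hxε hc₂.le
    have h2 : α * (c₂ * x) ≤ α * (c₂ * ε) := mul_le_mul_of_nonneg_left h1 hα0.le
    linarith [hεc₂]
  have hc₂x' : c₂ * x ≤ 1 / 2 := by
    have := mul_nonneg (by linarith : (0:ℝ) ≤ α - 1) hc₂x0.le
    linarith [hc₂x]
  have hy0 : 0 < y := lt_of_lt_of_le (by positivity) hy1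
  have hyx : y ≤ x / 2 := by
    have := mul_le_mul_of_nonneg_right hc₂x' hx0.le
    linarith [hy2]
  have hyx' : y ≤ x := by linarith
  -- the complex number and its components
  set z : ℂ := (x : ℂ) + (y : ℂ) * Complex.I with hzdef
  have hre : z.re = x := by simp [hzdef]
  have him : z.im = y := by simp [hzdef]
  have hz0 : z ≠ 0 := fun h => hx0.ne' (by rw [← hre, h, Complex.zero_re])
  clear_value z
  set r : ℝ := ‖z‖ with hrdef
  have hr : r = Real.sqrt (x ^ 2 + y ^ 2) := by
    rw [hrdef, Complex.norm_def, Complex.normSq_apply, hre, him]; ring_nf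
  have hrx : x ≤ r := by
    rw [hr]
    calc x = Real.sqrt (x ^ 2) := (Real.sqrt_sq hx0.le).symm
      _ ≤ Real.sqrt (x ^ 2 + y ^ 2) := Real.sqrt_le_sqrt (by linarith [sq_nonneg y])
  have hr0 : 0 < r := lt_of_lt_of_le hx0 hrx
  clear_value r
  have hr2 : r ≤ Real.sqrt 2 * x := by
    rw [hr]
    have h1 : Real.sqrt (x ^ 2 + y ^ 2) ≤ Real.sqrt ((Real.sqrt 2 * x) ^ 2) := by
      apply Real.sqrt_le_sqrt
      rw [mul_pow, Real.sq_sqrt (by norm_num : (0:ℝ) ≤ 2)]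
      have := mul_le_mul hyx' hyx' hy0.le hx0.le
      linarith
    rwa [Real.sqrt_sq (by positivity)] at h1
  have hsqrt2 : Real.sqrt 2 ≤ 2 := by
    have h := Real.sqrt_le_sqrt (by norm_num : (2:ℝ) ≤ 4)
    rwa [show (4:ℝ) = 2 ^ 2 by norm_num, Real.sqrt_sq (by norm_num : (0:ℝ) ≤ 2)] at h
  have hr2' : r ≤ 2 * x :=
    le_trans hr2 (mul_le_mul_of_nonneg_right hsqrt2 hx0.le)
  -- the argument
  set v : ℝ := y / r with hvdef
  have hv0 : 0 < v := by rw [hvdef]; exact div_pos hy0 hr0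
  clear_value v
  have hv_up : v ≤ c₂ * x := by
    rw [hvdef, div_le_iff₀ hr0]
    have := mul_le_mul_of_nonneg_left hrx hc₂x0.le
    linarith [hy2]
  have hv_low : c₁ * x / 2 ≤ v := by
    rw [hvdef, le_div_iff₀ hr0]
    have := mul_le_mul_of_nonneg_left hr2' (by positivity : (0:ℝ) ≤ c₁ * x / 2)
    linarith [hy1]
  have hv1 : v ≤ 1 / 2 := le_trans hv_up hc₂x'
  have harg : Complex.arg z = Real.arcsin v := by
    rw [Complex.arg_of_re_nonneg (by rw [hre]; exact hx0.le), him, hvdef, hrdef]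
  set θ : ℝ := Complex.arg z with hθdef
  have hθ0 : 0 ≤ θ := by rw [harg]; exact Real.arcsin_nonneg.2 hv0.le
  have hsinθ : Real.sin θ = v := by
    rw [harg]; exact Real.sin_arcsin (by linarith) (by linarith)
  have hθ_ge : v ≤ θ := by rw [← hsinθ]; exact Real.sin_le hθ0
  have hθ1 : θ ≤ 1 := by
    rw [harg]
    have hpi : 1 ≤ π / 2 := by linarith [Real.pi_gt_three]
    have hsin1 : (1/2 : ℝ) ≤ Real.sin 1 := by
      have := Real.sin_gt_sub_cube one_pos
      norm_num at this
      linarith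
    rw [Real.arcsin_le_iff_le_sin ⟨by linarith, by linarith⟩ ⟨by linarith [Real.pi_pos], hpi⟩]
    linarith
  have hθ_le : θ ≤ 4 / 3 * v := by
    have := aux_sin_ge hθ0 hθ1
    rw [hsinθ] at this
    linarith
  -- u = θ * α
  set u : ℝ := θ * α with hudef
  have hu0 : 0 ≤ u := by rw [hudef]; exact mul_nonneg hθ0 hα0.le
  have hu_up : u ≤ 4 / 3 * (α * (c₂ * x)) := by
    rw [hudef]
    have h1 : θ ≤ 4 / 3 * (c₂ * x) := by linarith
    have := mul_le_mul_of_nonneg_right h1 hα0.le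
    linarith
  have hu1 : u ≤ 1 := by linarith
  have hsin_low : 3 / 8 * α * c₁ * x ≤ Real.sin u := by
    have h1 := aux_sin_ge hu0 hu1
    have h2 : c₁ * x / 2 * α ≤ u := by
      rw [hudef]
      exact mul_le_mul_of_nonneg_right (by linarith) hα0.le
    linarith [h1, h2]
  have hsin_up : Real.sin u ≤ 4 / 3 * (α * (c₂ * x)) :=
    le_trans (Real.sin_le hu0) hu_up
  have hsin_nonneg : 0 ≤ Real.sin u := le_trans (by positivity) hsin_low
  have husq : u ^ 2 ≤ 2 * (α ^ 2 * c₂ ^ 2 * x ^ 2) := by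
    have := mul_le_mul hu_up hu_up hu0 (by positivity)
    linarith [this, sq_nonneg (α * c₂ * x)]
  have hcos_low : 1 - α ^ 2 * c₂ ^ 2 * x ^ 2 ≤ Real.cos u := by
    have h1 := Real.one_sub_sq_div_two_le_cos (x := u)
    linarith
  have hcos_up : Real.cos u ≤ 1 := Real.cos_le_one u
  have haux : α * (c₂ * x) * (c₂ * x) ≤ 1 / 2 * (1 / 2) :=
    mul_le_mul hc₂x hc₂x' hc₂x0.le (by norm_num)
  have hcos_nonneg : 0 ≤ Real.cos u := by
    have h2 : α * (c₂ * x) * (α * (c₂ * x)) ≤ 1 / 2 * (1 / 2) :=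
      mul_le_mul hc₂x hc₂x (by positivity) (by norm_num)
    linarith [hcos_low, h2]
  -- formulas for re/im of z ^ α
  have hw : z ^ (α : ℂ) = Complex.exp (Complex.log z * (α : ℂ)) :=
    Complex.cpow_def_of_ne_zero hz0 _
  have hmul_re : (Complex.log z * (α : ℂ)).re = Real.log r * α := by
    simp [Complex.mul_re, Complex.log_re, Complex.log_im, hrdef]
  have hmul_im : (Complex.log z * (α : ℂ)).im = u := by
    simp [Complex.mul_im, Complex.log_re, Complex.log_im, hudef, hθdef]
  have him_w : (z ^ (α : ℂ)).im = r ^ α * Real.sin u := by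
    rw [hw, Complex.exp_im, hmul_re, hmul_im, ← Real.rpow_def_of_pos hr0]
  have hre_w : (z ^ (α : ℂ)).re = r ^ α * Real.cos u := by
    rw [hw, Complex.exp_re, hmul_re, hmul_im, ← Real.rpow_def_of_pos hr0]
  -- rpow bounds
  have hX0 : (0:ℝ) < x ^ α := Real.rpow_pos_of_pos hx0 α
  have hR0 : (0:ℝ) < r ^ α := Real.rpow_pos_of_pos hr0 α
  have hra_low : x ^ α ≤ r ^ α := Real.rpow_le_rpow hx0.le hrx hα0.le
  have hra_up : r ^ α ≤ Real.sqrt 2 ^ α * x ^ α := by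
    rw [← Real.mul_rpow (Real.sqrt_nonneg 2) hx0.le]
    exact Real.rpow_le_rpow hr0.le hr2 hα0.le
  -- finer upper bound for r ^ α
  set q : ℝ := y ^ 2 / (2 * x ^ 2) with hqdef
  have hq0 : 0 ≤ q := by rw [hqdef]; positivity
  have hq_up : 2 * q ≤ c₂ ^ 2 * x ^ 2 := by
    have h1 : y * y ≤ c₂ * x ^ 2 * (c₂ * x ^ 2) := mul_le_mul hy2 hy2 hy0.le (by positivity)
    have h2 : (2:ℝ) * (y ^ 2 / (2 * x ^ 2)) = y ^ 2 / x ^ 2 := by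
      field_simp
    rw [hqdef, h2, div_le_iff₀ (by positivity : (0:ℝ) < x ^ 2)]
    linarith [h1]
  have hαq : α * q ≤ 1 := by
    have h1 : q ≤ c₂ ^ 2 * x ^ 2 / 2 := by linarith
    have h2 : α * q ≤ α * (c₂ ^ 2 * x ^ 2 / 2) := mul_le_mul_of_nonneg_left h1 hα0.le
    linarith [haux, h2]
  have hrq : r ≤ x * (1 + q) := by
    rw [hr]
    have h1 : Real.sqrt (x ^ 2 + y ^ 2) ≤ Real.sqrt ((x * (1 + q)) ^ 2) := by
      apply Real.sqrt_le_sqrt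
      have h2 : x ^ 2 * q = y ^ 2 / 2 := by rw [hqdef]; field_simp
      linarith [sq_nonneg (x * q), h2]
    rwa [Real.sqrt_sq (by positivity)] at h1
  have hra_fine : r ^ α ≤ x ^ α * (1 + α * (c₂ ^ 2 * x ^ 2)) := by
    have h1 : r ^ α ≤ (x * (1 + q)) ^ α := Real.rpow_le_rpow hr0.le hrq hα0.le
    have h2 : (x * (1 + q)) ^ α = x ^ α * (1 + q) ^ α :=
      Real.mul_rpow hx0.le (by linarith)
    have h3 : (1 + q) ^ α ≤ 1 + 2 * (α * q) := aux_rpow_le hq0 hα0 hαq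
    have h4 : 2 * (α * q) ≤ α * (c₂ ^ 2 * x ^ 2) := by
      have := mul_le_mul_of_nonneg_left hq_up hα0.le
      linarith [this]
    calc r ^ α ≤ x ^ α * (1 + q) ^ α := by rw [← h2]; exact h1
      _ ≤ x ^ α * (1 + 2 * (α * q)) := mul_le_mul_of_nonneg_left h3 hX0.le
      _ ≤ x ^ α * (1 + α * (c₂ ^ 2 * x ^ 2)) := mul_le_mul_of_nonneg_left (by linarith) hX0.le
  -- rpow additions
  have hxpow1 : x ^ (1 + α) = x * x ^ α := by
    rw [Real.rpow_add hx0, Real.rpow_one]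
  have hxpow2 : x ^ (2 + α) = x ^ 2 * x ^ α := by
    rw [Real.rpow_add hx0]
    norm_num [Real.rpow_two]
  refine ⟨?_, ?_, ?_⟩
  · -- lower bound on Im
    rw [him_w, hxpow1]
    calc C₁ * (x * x ^ α) = x ^ α * (3 / 8 * α * c₁ * x) := by rw [hC₁def]; ring
      _ ≤ x ^ α * Real.sin u := mul_le_mul_of_nonneg_left hsin_low hX0.le
      _ ≤ r ^ α * Real.sin u := mul_le_mul_of_nonneg_right hra_low hsin_nonneg
  · -- upper bound on Im
    rw [him_w, hxpow1]
    have key : r ^ α * Real.sin u ≤ Real.sqrt 2 ^ α * (4 / 3 * α * c₂) * (x * x ^ α) := by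
      have h1 : r ^ α * Real.sin u ≤ (Real.sqrt 2 ^ α * x ^ α) * (4 / 3 * (α * (c₂ * x))) :=
        mul_le_mul hra_up hsin_up hsin_nonneg (by positivity)
      linarith [h1]
    have hC₂ : Real.sqrt 2 ^ α * (4 / 3 * α * c₂) ≤ C₂ := by
      have h2 : 0 ≤ α * c₂ ^ 2 + α ^ 2 * c₂ ^ 2 := by positivity
      rw [hC₂def]; linarith
    have h3 := mul_le_mul_of_nonneg_right hC₂ (by positivity : (0:ℝ) ≤ x * x ^ α)
    linarith
  · -- bound on Re
    rw [hre_w, hxpow2]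
    have hposq : (0:ℝ) ≤ α * c₂ ^ 2 * (x ^ 2 * x ^ α) := by positivity
    have hposq2 : (0:ℝ) ≤ α ^ 2 * c₂ ^ 2 * (x ^ 2 * x ^ α) := by positivity
    have hup : r ^ α * Real.cos u - x ^ α ≤ (α * c₂ ^ 2 + α ^ 2 * c₂ ^ 2) * (x ^ 2 * x ^ α) := by
      have h1 : r ^ α * Real.cos u ≤ r ^ α := mul_le_of_le_one_right hR0.le hcos_up
      linarith [hra_fine, h1]
    have hlow : -((α * c₂ ^ 2 + α ^ 2 * c₂ ^ 2) * (x ^ 2 * x ^ α)) ≤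
        r ^ α * Real.cos u - x ^ α := by
      have h1 : x ^ α * Real.cos u ≤ r ^ α * Real.cos u :=
        mul_le_mul_of_nonneg_right hra_low hcos_nonneg
      have h2 : x ^ α * (1 - α ^ 2 * c₂ ^ 2 * x ^ 2) ≤ x ^ α * Real.cos u :=
        mul_le_mul_of_nonneg_left hcos_low hX0.le
      linarith [h1, h2]
    have hC₂' : α * c₂ ^ 2 + α ^ 2 * c₂ ^ 2 ≤ C₂ := by
      rw [hC₂def]
      have h1 : 0 ≤ Real.sqrt 2 ^ α * (4 / 3 * α * c₂) := by positivity
      linarith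
    have h3 := mul_le_mul_of_nonneg_right hC₂' (by positivity : (0:ℝ) ≤ x ^ 2 * x ^ α)
    rw [abs_le]
    exact ⟨by linarith, by linarith⟩
end

section
/- Let a, h > 0 and set T_{a,h} := { 1/z : z ∈ ℂ, Re z > a, −h < Im z < h }. Then there exist δ > 0 and constants 0 < c₁ ≤ c₂ such that every z in the topological frontier of T_{a,h} with 0 < Re z ≤ δ satisfies c₁·(Re z)² ≤ |Im z| ≤ c₂·(Re z)². -/
/-- The half-strip `S_{a,h} = { z ∈ ℂ : Re z > a, −h < Im z < h }`. -/
def halfStrip (a h : ℝ) : Set ℂ := {z : ℂ | a < z.re ∧ -h < z.im ∧ z.im < h}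

/-- The region `T_{a,h} = { 1/z : z ∈ S_{a,h} }`. -/
def Tregion (a h : ℝ) : Set ℂ := (fun z : ℂ => z⁻¹) '' halfStrip a h

lemma Tregion_eq (a h : ℝ) (ha : 0 < a) :
    Tregion a h = {w : ℂ | a * (w.re ^ 2 + w.im ^ 2) < w.re ∧
      |w.im| < h * (w.re ^ 2 + w.im ^ 2)} := by
  have hns : ∀ w : ℂ, w.re ^ 2 + w.im ^ 2 = Complex.normSq w := by
    intro w; rw [Complex.normSq_apply]; ring
  ext w
  simp only [Tregion, halfStrip, Set.mem_image, Set.mem_setOf_eq]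
  constructor
  · rintro ⟨z, ⟨hz1, hz2, hz3⟩, rfl⟩
    have hz0 : z ≠ 0 := fun h0 => by simp [h0] at hz1; linarith
    have hN : 0 < Complex.normSq z := Complex.normSq_pos.mpr hz0
    rw [hns, map_inv₀, Complex.inv_re, Complex.inv_im]
    constructor
    · rw [div_eq_mul_inv]
      exact mul_lt_mul_of_pos_right hz1 (by positivity)
    · rw [abs_div, abs_neg, abs_of_pos hN]
      rw [div_lt_iff₀ hN]
      have heq : h * (Complex.normSq z)⁻¹ * Complex.normSq z = h := by
        field_simp
      rw [heq]
      exact abs_lt.mpr ⟨hz2, hz3⟩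
  · rintro ⟨h1, h2⟩
    have hw0 : w ≠ 0 := by
      intro h0; rw [h0] at h1; simp at h1
    have hN : 0 < Complex.normSq w := Complex.normSq_pos.mpr hw0
    refine ⟨w⁻¹, ⟨?_, ?_, ?_⟩, inv_inv w⟩
    · rw [Complex.inv_re, lt_div_iff₀ hN, ← hns]; linarith
    · rw [Complex.inv_im, lt_div_iff₀ hN]
      have hl : |w.im| < h * Complex.normSq w := by rw [← hns]; exact h2
      have := (abs_lt.mp hl).2
      nlinarith
    · rw [Complex.inv_im, div_lt_iff₀ hN]
      have hl : |w.im| < h * Complex.normSq w := by rw [← hns]; exact h2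
      have := (abs_lt.mp hl).1
      nlinarith

lemma key_arith (a h x y : ℝ) (ha : 0 < a) (hh : 0 < h) (hx : 0 < x)
    (hx1 : x ≤ a / (4 * h ^ 2)) (hx2 : x ≤ 1 / (2 * a))
    (h1 : a * (x ^ 2 + y ^ 2) ≤ x) (h2 : |y| ≤ h * (x ^ 2 + y ^ 2))
    (h3 : a * (x ^ 2 + y ^ 2) = x ∨ |y| = h * (x ^ 2 + y ^ 2)) :
    h * x ^ 2 ≤ |y| ∧ |y| ≤ 2 * h * x ^ 2 := by
  have hy2 : y ^ 2 ≤ x / a := by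
    rw [le_div_iff₀ ha]
    linarith [mul_nonneg ha.le (sq_nonneg x)]
  have hxa : x / a ≤ 1 / (4 * h ^ 2) := by
    rw [div_le_div_iff₀ ha (by positivity)]
    rw [le_div_iff₀ (by positivity)] at hx1
    linarith
  have hy4 : y ^ 2 ≤ 1 / (4 * h ^ 2) := le_trans hy2 hxa
  have ht : h ^ 2 * y ^ 2 ≤ 1 / 4 := by
    rw [le_div_iff₀ (by positivity : (0:ℝ) < 4 * h ^ 2)] at hy4
    nlinarith
  have hyb : h * |y| ≤ 1 / 2 := by
    by_contra hc
    push_neg at hc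
    have h6 : (1:ℝ) / 4 < (h * |y|) ^ 2 := by
      nlinarith [mul_nonneg hh.le (abs_nonneg y)]
    rw [mul_pow, sq_abs] at h6
    linarith
  have h5 : h * y ^ 2 ≤ (1 / 2) * |y| := by
    have h7 := mul_le_mul_of_nonneg_right hyb (abs_nonneg y)
    have e : h * y ^ 2 = h * |y| * |y| := by
      rw [mul_assoc, ← sq_abs y]; ring
    linarith
  have hupper : |y| ≤ 2 * h * x ^ 2 := by
    have h2' : |y| ≤ h * x ^ 2 + h * y ^ 2 := by linarith [h2]
    linarith
  refine ⟨?_, hupper⟩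
  rcases h3 with h3 | h3
  · exfalso
    have hyy : y ^ 2 ≤ 4 * h ^ 2 * x ^ 4 := by
      have := mul_self_le_mul_self (abs_nonneg y) hupper
      rw [← sq_abs y]; nlinarith
    have hax : a * x ≤ 1 / 2 := by
      rw [le_div_iff₀ (by positivity : (0:ℝ) < 2*a)] at hx2; linarith
    have hhx : h ^ 2 * x ≤ a / 4 := by
      rw [le_div_iff₀ (by positivity : (0:ℝ) < 4*h^2)] at hx1
      linarith
    have e1 : a * x ^ 2 + a * y ^ 2 = x := by linear_combination h3
    have e2 : a * y ^ 2 ≤ 4 * a * h ^ 2 * x ^ 4 := by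
      have := mul_le_mul_of_nonneg_left hyy ha.le
      linarith
    have e4 : 4 * a * h ^ 2 * x ^ 4 ≤ a ^ 2 * x ^ 3 := by
      have := mul_le_mul_of_nonneg_right hhx (by positivity : (0:ℝ) ≤ 4 * a * x ^ 3)
      linarith
    have e5 : a ^ 2 * x ^ 3 ≤ (1 / 4) * x := by
      have p1 : (a * x) * (a * x) ≤ (1 / 2) * (1 / 2) :=
        mul_le_mul hax hax (by positivity) (by norm_num)
      have p2 := mul_le_mul_of_nonneg_right p1 hx.le
      linarith
    have e6 : a * x ^ 2 ≤ (1 / 2) * x := by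
      have := mul_le_mul_of_nonneg_right hax hx.le
      linarith
    linarith
  · have : 0 ≤ h * y ^ 2 := mul_nonneg hh.le (sq_nonneg y)
    linarith

/-- For `a, h > 0` the region `T_{a,h}` has a quadratic cusp at `0`:
there exist `δ > 0` and `0 < c₁ ≤ c₂` such that every point `z` of the frontier of
`T_{a,h}` with `0 < Re z ≤ δ` satisfies `c₁·(Re z)² ≤ |Im z| ≤ c₂·(Re z)²`. -/
theorem Tregion_quadratic_cusp (a h : ℝ) (ha : 0 < a) (hh : 0 < h) :
    ∃ δ > 0, ∃ c₁ c₂ : ℝ, 0 < c₁ ∧ c₁ ≤ c₂ ∧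
      ∀ z ∈ frontier (Tregion a h), 0 < z.re → z.re ≤ δ →
        c₁ * z.re ^ 2 ≤ |z.im| ∧ |z.im| ≤ c₂ * z.re ^ 2 := by
  refine ⟨min (a / (4 * h ^ 2)) (1 / (2 * a)), by positivity, h, 2 * h, hh, by linarith, ?_⟩
  intro z hz hre hδ
  rw [Tregion_eq a h ha] at hz
  set T : Set ℂ := {w : ℂ | a * (w.re ^ 2 + w.im ^ 2) < w.re ∧
      |w.im| < h * (w.re ^ 2 + w.im ^ 2)} with hT
  have c1 : Continuous fun w : ℂ => a * (w.re ^ 2 + w.im ^ 2) := by continuity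
  have c2 : Continuous fun w : ℂ => w.re := Complex.continuous_re
  have c3 : Continuous fun w : ℂ => |w.im| := by continuity
  have c4 : Continuous fun w : ℂ => h * (w.re ^ 2 + w.im ^ 2) := by continuity
  have hTopen : IsOpen T := by
    apply IsOpen.inter
    · exact isOpen_lt c1 c2
    · exact isOpen_lt c3 c4
  have hclosed : closure T ⊆ {w : ℂ | a * (w.re ^ 2 + w.im ^ 2) ≤ w.re ∧
      |w.im| ≤ h * (w.re ^ 2 + w.im ^ 2)} := by
    apply closure_minimal
    · intro w hw; exact ⟨le_of_lt hw.1, le_of_lt hw.2⟩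
    · apply IsClosed.inter
      · exact isClosed_le c1 c2
      · exact isClosed_le c3 c4
  rw [frontier, hTopen.interior_eq] at hz
  obtain ⟨hzc, hznT⟩ := hz
  obtain ⟨h1, h2⟩ := hclosed hzc
  have h3 : a * (z.re ^ 2 + z.im ^ 2) = z.re ∨
      |z.im| = h * (z.re ^ 2 + z.im ^ 2) := by
    by_contra hcon
    push_neg at hcon
    exact hznT ⟨lt_of_le_of_ne h1 hcon.1, lt_of_le_of_ne h2 hcon.2⟩
  exact key_arith a h z.re z.im ha hh hre
    (le_trans hδ (min_le_left _ _)) (le_trans hδ (min_le_right _ _)) h1 h2 h3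
end

section
/- Let α > 1 and let a, h > 0 be such that α·arctan(h/a) < π and such that the principal power map z ↦ z^α is injective on T_{a,h} := { 1/z : z ∈ ℂ, Re z > a, −h < Im z < h }. Set 𝒬 := { z^α : z ∈ T_{a,h} }. Define, for w ∈ 𝒬, Φ(w) := ( sin( (πi/(2h))·(w^{−1/α} − a) ) − i ) / ( sin( (πi/(2h))·(w^{−1/α} − a) ) + i ), where w^{−1/α} denotes the principal-branch power. Then Φ is well defined (the denominator never vanishes on 𝒬), is holomorphic on 𝒬, maps 𝒬 bijectively onto the open unit disc { ζ ∈ ℂ : |ζ| < 1 }, and Φ(o) = 0 where o := ( (2h/π)·log(1+√2) + a )^{−α}. -/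
/-- The comparison domain `𝒬^{α,a,h} = { z^α : z ∈ T_{a,h} }` (principal branch). -/
noncomputable def Qregion (α a h : ℝ) : Set ℂ := (fun z : ℂ => z ^ (α : ℂ)) '' Tregion a h

/-- The explicit map `Φ_{α,a,h}` of display (6.2) of the paper. -/
noncomputable def PhiMap (α a h : ℝ) (w : ℂ) : ℂ :=
  (Complex.sin ((Real.pi * Complex.I / ((2 * h : ℝ) : ℂ)) * (w ^ ((-(1 / α) : ℝ) : ℂ) - (a : ℂ)))
      - Complex.I) /
    (Complex.sin ((Real.pi * Complex.I / ((2 * h : ℝ) : ℂ)) * (w ^ ((-(1 / α) : ℝ) : ℂ) - (a : ℂ)))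
      + Complex.I)

/-- The base point `o_{α,a,h} = ((2h/π)·log(1+√2) + a)^{−α}` of display (6.3) of the paper. -/
noncomputable def basePt (α a h : ℝ) : ℝ :=
  ((2 * h / Real.pi) * Real.log (1 + Real.sqrt 2) + a) ^ (-α)


section PhiAuxLemmas
open Complex Set Metric

def UHP : Set ℂ := {z : ℂ | 0 < z.im}
def Rstrip : Set ℂ := {z : ℂ | -(Real.pi/2) < z.re ∧ z.re < Real.pi/2 ∧ 0 < z.im}

lemma sin_im' (z : ℂ) : (Complex.sin z).im = Real.cos z.re * Real.sinh z.im := by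
  rw [Complex.sin_eq]
  simp [← Complex.ofReal_sin, ← Complex.ofReal_cos, ← Complex.ofReal_sinh,
    ← Complex.ofReal_cosh]

lemma sin_bijOn : Set.BijOn Complex.sin Rstrip UHP := by
  refine ⟨?_, ?_, ?_⟩
  · rintro ζ ⟨h1, h2, h3⟩
    show 0 < (Complex.sin ζ).im
    rw [sin_im']
    exact mul_pos (Real.cos_pos_of_mem_Ioo ⟨h1, h2⟩) (Real.sinh_pos_iff.mpr h3)
  · rintro ζ₁ ⟨h11, h12, h13⟩ ζ₂ ⟨h21, h22, h23⟩ heq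
    have h0 : 2 * Complex.sin ((ζ₁ - ζ₂)/2) * Complex.cos ((ζ₁ + ζ₂)/2) = 0 := by
      rw [← Complex.sin_sub_sin, heq, sub_self]
    have h0' : Complex.sin ((ζ₁ - ζ₂)/2) = 0 ∨ Complex.cos ((ζ₁ + ζ₂)/2) = 0 := by
      rcases mul_eq_zero.mp h0 with hx | hx
      · rcases mul_eq_zero.mp hx with hx | hx
        · norm_num at hx
        · exact Or.inl hx
      · exact Or.inr hx
    rcases h0' with hs | hc
    · obtain ⟨k, hk⟩ := Complex.sin_eq_zero_iff.mp hs
      have hk' : ζ₁ - ζ₂ = ((2*(k:ℝ)*Real.pi : ℝ) : ℂ) := by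
        push_cast
        linear_combination (2:ℂ) * hk
      have hre : ζ₁.re - ζ₂.re = 2*(k:ℝ)*Real.pi := by
        simpa using congrArg Complex.re hk'
      have him : ζ₁.im = ζ₂.im := by
        have := congrArg Complex.im hk'
        simp at this
        linarith
      have hk0 : k = 0 := by
        have hπ := Real.pi_pos
        have habs : |(k:ℝ)| < 1 := by
          rw [abs_lt]
          constructor <;> nlinarith
        have h1 : |k| < 1 := by exact_mod_cast habs
        rcases abs_lt.mp h1 with ⟨hp, hq⟩
        omega
      rw [hk0] at hre
      simp at hre
      apply Complex.ext
      · linarith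
      · exact him
    · obtain ⟨k, hk⟩ := Complex.cos_eq_zero_iff.mp hc
      have hk' : ζ₁ + ζ₂ = (((2*(k:ℝ)+1)*Real.pi : ℝ) : ℂ) := by
        push_cast
        linear_combination (2:ℂ) * hk
      have := congrArg Complex.im hk'
      simp at this
      linarith
  · intro w hw
    have hwim : 0 < w.im := hw
    have hw2 : (1:ℂ) - w^2 ≠ 0 := by
      intro hc
      have hfac : (1 - w) * (1 + w) = 0 := by linear_combination hc
      rcases mul_eq_zero.mp hfac with hh | hh
      · have : w = 1 := by linear_combination -hh
        rw [this] at hwim; simp at hwim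
      · have : w = -1 := by linear_combination hh
        rw [this] at hwim; simp at hwim
    set v : ℂ := (1 - w^2) ^ ((1:ℂ)/2) with hv
    have hv2 : v * v = 1 - w^2 := by
      rw [hv, ← Complex.cpow_add _ _ hw2]
      norm_num
    have hr1 : (Complex.I*w + v)^2 - 2*Complex.I*w*(Complex.I*w + v) - 1 = 0 := by
      linear_combination hv2 - w^2 * Complex.I_mul_I
    have hr2 : (Complex.I*w - v)^2 - 2*Complex.I*w*(Complex.I*w - v) - 1 = 0 := by
      linear_combination hv2 - w^2 * Complex.I_mul_I
    obtain ⟨q, hqre, hq⟩ : ∃ q : ℂ, 0 < q.re ∧ q^2 - 2*Complex.I*w*q - 1 = 0 := by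
      have hprod : (Complex.I*w + v) * (Complex.I*w - v) = -1 := by
        linear_combination -hv2 + w^2 * Complex.I_mul_I
      have hq1 : Complex.I*w + v ≠ 0 := by
        intro hc; rw [hc, zero_mul] at hprod; norm_num at hprod
      have hns1 : 0 < Complex.normSq (Complex.I*w + v) := Complex.normSq_pos.mpr hq1
      have hq2eq : Complex.I*w - v = -(Complex.I*w + v)⁻¹ := by
        field_simp
        linear_combination hprod
      have hre2 : (Complex.I*w - v).re = -((Complex.I*w + v).re / Complex.normSq (Complex.I*w + v)) := by
        rw [hq2eq, Complex.neg_re, Complex.inv_re]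
      have e1 : (Complex.I*w + v).re = -w.im + v.re := by
        simp [Complex.add_re, Complex.mul_re]
      have e2 : (Complex.I*w - v).re = -w.im - v.re := by
        simp [Complex.sub_re, Complex.mul_re]
      have hsumre : (Complex.I*w + v).re + (Complex.I*w - v).re = -2*w.im := by
        rw [e1, e2]; ring
      rcases lt_trichotomy (Complex.I*w + v).re 0 with hlt | heq0 | hgt
      · refine ⟨Complex.I*w - v, ?_, hr2⟩
        rw [hre2]
        have := div_neg_of_neg_of_pos hlt hns1
        linarith
      · exfalso
        have hz : (Complex.I*w - v).re = 0 := by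
          rw [hre2, heq0, zero_div, neg_zero]
        rw [heq0, hz] at hsumre
        linarith
      · exact ⟨Complex.I*w + v, hgt, hr1⟩
    have hq0 : q ≠ 0 := by
      intro hc; rw [hc] at hq; norm_num at hq
    have hnsq : 0 < Complex.normSq q := Complex.normSq_pos.mpr hq0
    have hwIm : -2 * w.im = q.re - q.re / Complex.normSq q := by
      have hkey : q - q⁻¹ = 2*Complex.I*w := by
        field_simp
        linear_combination hq
      have := congrArg Complex.re hkey
      simp only [Complex.sub_re, Complex.inv_re, Complex.mul_re, Complex.mul_im,
        Complex.I_re, Complex.I_im, Complex.re_ofNat, Complex.im_ofNat] at this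
      linarith
    have hnslt : Complex.normSq q < 1 := by
      by_contra hcon
      push_neg at hcon
      have hle : q.re / Complex.normSq q ≤ q.re := by
        rw [div_le_iff₀ hnsq]
        nlinarith
      linarith
    have habsq : ‖q‖ < 1 := by
      have h1 := Complex.sq_norm q
      nlinarith [norm_nonneg q]
    have habsq0 : 0 < ‖q‖ := norm_pos_iff.mpr hq0
    refine ⟨-Complex.I * Complex.log q, ⟨?_, ?_, ?_⟩, ?_⟩
    · show -(Real.pi/2) < (-Complex.I * Complex.log q).re
      have hre : (-Complex.I * Complex.log q).re = Complex.arg q := by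
        simp [Complex.mul_re, Complex.log_im]
      rw [hre]
      have := Complex.abs_arg_lt_pi_div_two_iff.mpr (Or.inl hqre)
      rw [abs_lt] at this
      linarith [this.1]
    · show (-Complex.I * Complex.log q).re < Real.pi/2
      have hre : (-Complex.I * Complex.log q).re = Complex.arg q := by
        simp [Complex.mul_re, Complex.log_im]
      rw [hre]
      have := Complex.abs_arg_lt_pi_div_two_iff.mpr (Or.inl hqre)
      rw [abs_lt] at this
      exact this.2
    · show 0 < (-Complex.I * Complex.log q).im
      have him : (-Complex.I * Complex.log q).im = -Real.log ‖q‖ := by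
        simp [Complex.mul_im, Complex.log_re]
      rw [him]
      have := Real.log_neg habsq0 habsq
      linarith
    · show Complex.sin (-Complex.I * Complex.log q) = w
      have he1 : (-Complex.I * Complex.log q) * Complex.I = Complex.log q := by
        linear_combination (- Complex.log q) * Complex.I_mul_I
      have he2 : -(-Complex.I * Complex.log q) * Complex.I = -Complex.log q := by
        linear_combination (Complex.log q) * Complex.I_mul_I
      simp only [Complex.sin, he1, he2, Complex.exp_neg, Complex.exp_log hq0]
      have hkey : q⁻¹ = q - 2*Complex.I*w := by
        field_simp
        linear_combination - hq
      rw [hkey]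
      linear_combination (-w) * Complex.I_mul_I


lemma cayley_bijOn :
    Set.BijOn (fun ζ : ℂ => (ζ - Complex.I)/(ζ + Complex.I)) UHP (Metric.ball (0:ℂ) 1) := by
  refine ⟨?_, ?_, ?_⟩
  · intro ζ hζ
    have hζ0 : 0 < ζ.im := hζ
    have hden : ζ + I ≠ 0 := by
      intro hc
      have := congrArg Complex.im hc
      simp at this; linarith
    have h2 : Complex.normSq (ζ - I) < Complex.normSq (ζ + I) := by
      simp only [Complex.normSq_apply, Complex.sub_re, Complex.sub_im, Complex.add_re,
        Complex.add_im, Complex.I_re, Complex.I_im]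
      nlinarith
    have habs : ‖ζ - I‖ < ‖ζ + I‖ := by
      rw [Complex.norm_def, Complex.norm_def]
      exact Real.sqrt_lt_sqrt (Complex.normSq_nonneg _) h2
    simp only [mem_ball, dist_zero_right, norm_div]
    rw [div_lt_one (norm_pos_iff.mpr hden)]
    exact habs
  · intro ζ₁ h₁ ζ₂ h₂ heq
    have hd1 : ζ₁ + I ≠ 0 := by
      intro hc; have := congrArg Complex.im hc; simp at this
      have h0 : 0 < ζ₁.im := h₁; linarith
    have hd2 : ζ₂ + I ≠ 0 := by
      intro hc; have := congrArg Complex.im hc; simp at this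
      have h0 : 0 < ζ₂.im := h₂; linarith
    simp only at heq
    rw [div_eq_div_iff hd1 hd2] at heq
    have h2I : (2:ℂ)*I ≠ 0 := by simp [Complex.I_ne_zero]
    have : 2*I*ζ₁ = 2*I*ζ₂ := by linear_combination heq
    exact mul_left_cancel₀ h2I this
  · intro u hu
    have hu1 : ‖u‖ < 1 := by simpa using mem_ball_zero_iff.mp hu
    have hns : u.re * u.re + u.im * u.im < 1 := by
      have h1 := Complex.sq_norm u
      simp only [Complex.normSq_apply] at h1
      nlinarith [norm_nonneg u]
    have hd : (1:ℂ) - u ≠ 0 := by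
      intro hc
      have : u = 1 := by linear_combination -hc
      rw [this] at hu1; simp at hu1
    refine ⟨Complex.I*(1+u)/(1-u), ?_, ?_⟩
    · show 0 < (Complex.I*(1+u)/(1-u)).im
      have hns0 : 0 < Complex.normSq (1-u) := Complex.normSq_pos.mpr hd
      have hD : 0 < (1 - u.re) * (1 - u.re) + (0 - u.im) * (0 - u.im) := by
        simpa [Complex.normSq_apply, Complex.sub_re, Complex.sub_im] using hns0
      rw [Complex.div_im]
      simp only [Complex.mul_im, Complex.mul_re, Complex.I_re, Complex.I_im, Complex.add_re,
        Complex.add_im, Complex.one_re, Complex.one_im, Complex.sub_re, Complex.sub_im,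
        Complex.normSq_apply]
      rw [div_sub_div_same, lt_div_iff₀ hD]
      nlinarith
    · show (Complex.I*(1+u)/(1-u) - I) / (Complex.I*(1+u)/(1-u) + I) = u
      have hden : Complex.I*(1+u)/(1-u) + I = 2*I/(1-u) := by
        field_simp; ring
      have hnum : Complex.I*(1+u)/(1-u) - I = 2*I*u/(1-u) := by
        field_simp; ring
      rw [hden, hnum]
      have h2I : (2:ℂ)*I/(1-u) ≠ 0 := by
        apply div_ne_zero _ hd
        simp [Complex.I_ne_zero]
      field_simp


lemma cmul_re (h : ℝ) (s : ℂ) :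
    ((Real.pi : ℂ) * Complex.I / ((2*h : ℝ) : ℂ) * s).re = -(Real.pi/(2*h)) * s.im := by
  have e : (Real.pi : ℂ) * Complex.I / ((2*h : ℝ) : ℂ) * s
      = ((Real.pi/(2*h) : ℝ) : ℂ) * (s * Complex.I) := by
    rw [Complex.ofReal_div]; ring
  rw [e, Complex.re_ofReal_mul, Complex.mul_I_re]
  ring

lemma cmul_im (h : ℝ) (s : ℂ) :
    ((Real.pi : ℂ) * Complex.I / ((2*h : ℝ) : ℂ) * s).im = (Real.pi/(2*h)) * s.re := by
  have e : (Real.pi : ℂ) * Complex.I / ((2*h : ℝ) : ℂ) * s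
      = ((Real.pi/(2*h) : ℝ) : ℂ) * (s * Complex.I) := by
    rw [Complex.ofReal_div]; ring
  rw [e, Complex.im_ofReal_mul, Complex.mul_I_im]

lemma affine_bijOn (a h : ℝ) (ha : 0 < a) (hh : 0 < h) :
    Set.BijOn (fun s : ℂ => (Real.pi : ℂ) * Complex.I / ((2*h : ℝ) : ℂ) * (s - (a:ℂ)))
      (halfStrip a h) Rstrip := by
  have hπ := Real.pi_pos
  have hc : 0 < Real.pi/(2*h) := by positivity
  have hch : Real.pi/(2*h) * h = Real.pi/2 := by field_simp
  have hc0 : ((Real.pi : ℂ) * Complex.I / ((2*h : ℝ) : ℂ)) ≠ 0 := by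
    apply div_ne_zero
    · exact mul_ne_zero (Complex.ofReal_ne_zero.mpr Real.pi_ne_zero) Complex.I_ne_zero
    · exact Complex.ofReal_ne_zero.mpr (by positivity)
  refine ⟨?_, ?_, ?_⟩
  · rintro s ⟨h1, h2, h3⟩
    refine ⟨?_, ?_, ?_⟩
    · show -(Real.pi/2) < ((Real.pi : ℂ) * Complex.I / ((2*h : ℝ) : ℂ) * (s - (a:ℂ))).re
      rw [cmul_re]
      simp only [Complex.sub_im, Complex.ofReal_im, sub_zero]
      nlinarith [mul_lt_mul_of_pos_left (show s.im < h by linarith) hc]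
    · show ((Real.pi : ℂ) * Complex.I / ((2*h : ℝ) : ℂ) * (s - (a:ℂ))).re < Real.pi/2
      rw [cmul_re]
      simp only [Complex.sub_im, Complex.ofReal_im, sub_zero]
      nlinarith [mul_lt_mul_of_pos_left (show -s.im < h by linarith) hc]
    · show 0 < ((Real.pi : ℂ) * Complex.I / ((2*h : ℝ) : ℂ) * (s - (a:ℂ))).im
      rw [cmul_im]
      simp only [Complex.sub_re, Complex.ofReal_re]
      nlinarith
  · intro s₁ _ s₂ _ heq
    simp only at heq
    have := mul_left_cancel₀ hc0 heq
    have h2 := congrArg (· + (a:ℂ)) this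
    simpa using h2
  · rintro ζ ⟨h1, h2, h3⟩
    refine ⟨(a:ℂ) + ((2*h/Real.pi : ℝ) : ℂ) * (ζ * (-Complex.I)), ⟨?_, ?_, ?_⟩, ?_⟩
    · show a < ((a:ℂ) + ((2*h/Real.pi : ℝ) : ℂ) * (ζ * (-Complex.I))).re
      simp only [Complex.add_re, Complex.ofReal_re, Complex.mul_re, Complex.mul_im,
        Complex.ofReal_im, Complex.neg_re, Complex.neg_im, Complex.I_re, Complex.I_im]
      have : 0 < 2*h/Real.pi := by positivity
      nlinarith
    · show -h < ((a:ℂ) + ((2*h/Real.pi : ℝ) : ℂ) * (ζ * (-Complex.I))).im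
      simp only [Complex.add_im, Complex.ofReal_im, Complex.mul_im, Complex.mul_re,
        Complex.ofReal_re, Complex.neg_re, Complex.neg_im, Complex.I_re, Complex.I_im]
      have hgt : 0 < 2*h/Real.pi := by positivity
      have hkey : 2*h/Real.pi * (Real.pi/2) = h := by field_simp
      nlinarith [mul_lt_mul_of_pos_left h2 hgt]
    · show ((a:ℂ) + ((2*h/Real.pi : ℝ) : ℂ) * (ζ * (-Complex.I))).im < h
      simp only [Complex.add_im, Complex.ofReal_im, Complex.mul_im, Complex.mul_re,
        Complex.ofReal_re, Complex.neg_re, Complex.neg_im, Complex.I_re, Complex.I_im]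
      have hgt : 0 < 2*h/Real.pi := by positivity
      have hkey : 2*h/Real.pi * (Real.pi/2) = h := by field_simp
      nlinarith [mul_lt_mul_of_pos_left h1 hgt]
    · show (Real.pi : ℂ) * Complex.I / ((2*h : ℝ) : ℂ) *
          ((a:ℂ) + ((2*h/Real.pi : ℝ) : ℂ) * (ζ * (-Complex.I)) - (a:ℂ)) = ζ
      have hπc : ((Real.pi : ℝ) : ℂ) ≠ 0 := Complex.ofReal_ne_zero.mpr Real.pi_ne_zero
      have hhc : ((h : ℝ) : ℂ) ≠ 0 := Complex.ofReal_ne_zero.mpr hh.ne'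
      push_cast
      field_simp
      linear_combination (-2 * (h:ℂ) * ζ) * Complex.I_mul_I


lemma arg_bound (a h : ℝ) (ha : 0 < a) (hh : 0 < h) {s : ℂ} (hs : s ∈ halfStrip a h) :
    |Complex.arg s| < Real.arctan (h/a) := by
  obtain ⟨h1, h2, h3⟩ := hs
  have hsre : 0 < s.re := lt_trans ha h1
  have habs2 : |Complex.arg s| < Real.pi/2 :=
    Complex.abs_arg_lt_pi_div_two_iff.mpr (Or.inl hsre)
  have harg : Complex.arg s = Real.arctan (s.im / s.re) := by
    rw [← Complex.tan_arg s, Real.arctan_tan (by linarith [abs_lt.mp habs2]) (by linarith [abs_lt.mp habs2])]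
  rw [harg]
  have hmono := Real.arctan_strictMono
  have hlt : |s.im / s.re| < h/a := by
    rw [abs_div, abs_of_pos hsre, div_lt_div_iff₀ hsre ha]
    have : |s.im| < h := abs_lt.mpr ⟨h2, h3⟩
    nlinarith [abs_nonneg s.im]
  calc |Real.arctan (s.im / s.re)| = Real.arctan |s.im / s.re| := by
        rcases le_or_gt 0 (s.im / s.re) with hx | hx
        · rw [_root_.abs_of_nonneg hx, _root_.abs_of_nonneg]
          simpa using hmono.monotone hx
        · rw [_root_.abs_of_neg hx, _root_.abs_of_neg, ← Real.arctan_neg]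
          simpa using hmono (show s.im/s.re < 0 from hx)
    _ < Real.arctan (h/a) := hmono hlt

lemma arg_inv_bound (α a h : ℝ) (hα : 1 < α) (ha : 0 < a) (hh : 0 < h)
    (harc : α * Real.arctan (h / a) < Real.pi) {s : ℂ} (hs : s ∈ halfStrip a h) :
    |Complex.arg s⁻¹ * α| < Real.pi := by
  have hb := arg_bound a h ha hh hs
  have hsre : 0 < s.re := lt_trans ha hs.1
  have hargne : Complex.arg s ≠ Real.pi := by
    have := Complex.abs_arg_lt_pi_div_two_iff.mpr (Or.inl hsre)
    intro hc; rw [hc] at this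
    have hπ := Real.pi_pos
    rw [abs_of_pos hπ] at this
    linarith
  have hinv : Complex.arg s⁻¹ = -Complex.arg s := by
    rw [Complex.arg_inv, if_neg hargne]
  rw [hinv, abs_mul, abs_neg, abs_of_pos (by linarith : (0:ℝ) < α)]
  have hat : 0 ≤ Real.arctan (h/a) := by
    rw [← Real.arctan_zero]
    exact Real.arctan_strictMono.monotone (by positivity)
  calc |Complex.arg s| * α < Real.arctan (h/a) * α := by
        apply mul_lt_mul_of_pos_right hb; linarith
    _ = α * Real.arctan (h/a) := by ring
    _ < Real.pi := harc

lemma psi_eq (α a h : ℝ) (hα : 1 < α) (ha : 0 < a) (hh : 0 < h)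
    (harc : α * Real.arctan (h / a) < Real.pi) {s : ℂ} (hs : s ∈ halfStrip a h) :
    ((s⁻¹) ^ (α : ℂ)) ^ ((-(1/α) : ℝ) : ℂ) = s := by
  have hsre : 0 < s.re := lt_trans ha hs.1
  have hs0 : s ≠ 0 := by
    intro hc; rw [hc] at hsre; simp at hsre
  have hbound := arg_inv_bound α a h hα ha hh harc hs
  have him : (Complex.log s⁻¹ * (α:ℂ)).im = Complex.arg s⁻¹ * α := by
    simp [Complex.mul_im, Complex.log_im]
  have h1 : -Real.pi < (Complex.log s⁻¹ * (α:ℂ)).im := by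
    rw [him]; linarith [abs_lt.mp hbound]
  have h2 : (Complex.log s⁻¹ * (α:ℂ)).im ≤ Real.pi := by
    rw [him]; linarith [abs_lt.mp hbound]
  have hmul := (Complex.cpow_mul (x := s⁻¹) (y := (α:ℂ)) (((-(1/α) : ℝ)) : ℂ) h1 h2).symm
  have hexp : (α:ℂ) * ((-(1/α) : ℝ) : ℂ) = -1 := by
    have hα0 : (α:ℂ) ≠ 0 := by
      exact_mod_cast (show (α:ℝ) ≠ 0 by linarith)
    push_cast
    field_simp
  rw [hmul, hexp, Complex.cpow_neg_one, inv_inv]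

lemma pow_mem_slitPlane (α a h : ℝ) (hα : 1 < α) (ha : 0 < a) (hh : 0 < h)
    (harc : α * Real.arctan (h / a) < Real.pi) {s : ℂ} (hs : s ∈ halfStrip a h) :
    (s⁻¹) ^ (α : ℂ) ∈ Complex.slitPlane := by
  have hsre : 0 < s.re := lt_trans ha hs.1
  have hs0 : s⁻¹ ≠ 0 := inv_ne_zero (by intro hc; rw [hc] at hsre; simp at hsre)
  have hbound := arg_inv_bound α a h hα ha hh harc hs
  have him : (Complex.log s⁻¹ * (α:ℂ)).im = Complex.arg s⁻¹ * α := by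
    simp [Complex.mul_im, Complex.log_im]
  rw [Complex.cpow_def_of_ne_zero hs0, Complex.mem_slitPlane_iff]
  set θ := Complex.arg s⁻¹ * α with hθ
  rcases eq_or_ne θ 0 with hz | hnz
  · left
    rw [Complex.exp_re, him, hz]
    simp [Real.cos_zero]
    positivity
  · right
    rw [Complex.exp_im, him]
    apply mul_ne_zero (Real.exp_ne_zero _)
    rcases lt_or_gt_of_ne hnz with hlt | hgt
    · have : Real.sin (-θ) > 0 := Real.sin_pos_of_pos_of_lt_pi (by linarith)
        (by rw [abs_lt] at hbound; linarith [hbound.1])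
      rw [Real.sin_neg] at this
      linarith
    · have : Real.sin θ > 0 := Real.sin_pos_of_pos_of_lt_pi hgt
        (by rw [abs_lt] at hbound; linarith [hbound.2])
      linarith


lemma phi_base (α a h : ℝ) (hα : 1 < α) (ha : 0 < a) (hh : 0 < h) :
    PhiMap α a h ((basePt α a h : ℝ) : ℂ) = 0 := by
  have hπ := Real.pi_pos
  set L := Real.log (1 + Real.sqrt 2) with hLdef
  have hs2 : 0 < Real.sqrt 2 := Real.sqrt_pos.mpr (by norm_num)
  have hL : 0 < L := Real.log_pos (by linarith)
  have hx0 : 0 < 2 * h / Real.pi * L + a := by positivity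
  have step1 : ((basePt α a h : ℝ) : ℂ) ^ ((-(1/α) : ℝ) : ℂ)
      = ((2 * h / Real.pi * L + a : ℝ) : ℂ) := by
    rw [basePt, ← hLdef, ← Complex.ofReal_cpow (by positivity) (-(1/α)),
      ← Real.rpow_mul (le_of_lt hx0)]
    have hexp : -α * -(1/α) = 1 := by field_simp
    rw [hexp, Real.rpow_one]
  have step2 : (Real.pi : ℂ) * Complex.I / ((2*h : ℝ) : ℂ) *
      (((2 * h / Real.pi * L + a : ℝ) : ℂ) - (a : ℂ)) = (L : ℂ) * Complex.I := by
    have hπc : ((Real.pi : ℝ) : ℂ) ≠ 0 := Complex.ofReal_ne_zero.mpr Real.pi_ne_zero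
    have hhc : ((h : ℝ) : ℂ) ≠ 0 := Complex.ofReal_ne_zero.mpr hh.ne'
    push_cast
    field_simp
    ring
  have step3 : Complex.sin ((L : ℂ) * Complex.I) = Complex.I := by
    rw [Complex.sin_mul_I, ← Complex.ofReal_sinh]
    have hsinh : Real.sinh L = 1 := by
      rw [hLdef, Real.sinh_log (by positivity)]
      have h2 : Real.sqrt 2 * Real.sqrt 2 = 2 := Real.mul_self_sqrt (by norm_num)
      have hne : (1 + Real.sqrt 2) ≠ 0 := by positivity
      field_simp
      nlinarith
    rw [hsinh]
    simp
  rw [PhiMap, step1, step2, step3]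
  simp


theorem PhiMap_biholomorphism_aux (α a h : ℝ) (hα : 1 < α) (ha : 0 < a) (hh : 0 < h)
    (harc : α * Real.arctan (h / a) < Real.pi) :
    (∀ w ∈ Qregion α a h,
      Complex.sin ((Real.pi * Complex.I / ((2 * h : ℝ) : ℂ)) *
          (w ^ ((-(1 / α) : ℝ) : ℂ) - (a : ℂ))) + Complex.I ≠ 0) ∧
    DifferentiableOn ℂ (PhiMap α a h) (Qregion α a h) ∧
    Set.BijOn (PhiMap α a h) (Qregion α a h) (Metric.ball (0 : ℂ) 1) ∧
    PhiMap α a h ((basePt α a h : ℝ) : ℂ) = 0 := by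
  have hQ : Qregion α a h = (fun s : ℂ => (s⁻¹) ^ (α : ℂ)) '' halfStrip a h := by
    rw [Qregion, Tregion, Set.image_image]
  -- the partial inverse ψ
  have hψbij : Set.BijOn (fun w : ℂ => w ^ ((-(1/α) : ℝ) : ℂ)) (Qregion α a h)
      (halfStrip a h) := by
    refine ⟨?_, ?_, ?_⟩
    · intro w hw
      rw [hQ] at hw
      obtain ⟨s, hs, rfl⟩ := hw
      show ((s⁻¹) ^ (α : ℂ)) ^ ((-(1/α) : ℝ) : ℂ) ∈ halfStrip a h
      rw [psi_eq α a h hα ha hh harc hs]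
      exact hs
    · intro w₁ h₁ w₂ h₂ heq
      rw [hQ] at h₁ h₂
      obtain ⟨s₁, hs₁, rfl⟩ := h₁
      obtain ⟨s₂, hs₂, rfl⟩ := h₂
      simp only [psi_eq α a h hα ha hh harc hs₁, psi_eq α a h hα ha hh harc hs₂] at heq
      rw [heq]
    · intro s hs
      refine ⟨(s⁻¹) ^ (α : ℂ), ?_, psi_eq α a h hα ha hh harc hs⟩
      rw [hQ]
      exact ⟨s, hs, rfl⟩
  have hchain : ∀ w ∈ Qregion α a h,
      0 < (Complex.sin ((Real.pi : ℂ) * Complex.I / ((2*h : ℝ) : ℂ) *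
        (w ^ ((-(1/α) : ℝ) : ℂ) - (a : ℂ)))).im := by
    intro w hw
    have h1 := hψbij.mapsTo hw
    have h2 := (affine_bijOn a h ha hh).mapsTo h1
    have h3 := sin_bijOn.mapsTo h2
    exact h3
  have hne : ∀ w ∈ Qregion α a h,
      Complex.sin ((Real.pi * Complex.I / ((2 * h : ℝ) : ℂ)) *
          (w ^ ((-(1 / α) : ℝ) : ℂ) - (a : ℂ))) + Complex.I ≠ 0 := by
    intro w hw hc
    have him := congrArg Complex.im hc
    simp only [Complex.add_im, Complex.I_im, Complex.zero_im] at him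
    have := hchain w hw
    linarith
  refine ⟨hne, ?_, ?_, phi_base α a h hα ha hh⟩
  · -- differentiability
    intro w hw
    apply DifferentiableAt.differentiableWithinAt
    have hslit : w ∈ Complex.slitPlane := by
      rw [hQ] at hw
      obtain ⟨s, hs, rfl⟩ := hw
      exact pow_mem_slitPlane α a h hα ha hh harc hs
    have d1 : DifferentiableAt ℂ (fun w : ℂ => w ^ ((-(1/α) : ℝ) : ℂ)) w :=
      DifferentiableAt.cpow differentiableAt_id (differentiableAt_const _) hslit
    have d2 : DifferentiableAt ℂ (fun w : ℂ =>
        Complex.sin ((Real.pi * Complex.I / ((2 * h : ℝ) : ℂ)) *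
          (w ^ ((-(1 / α) : ℝ) : ℂ) - (a : ℂ)))) w := by
      apply Complex.differentiable_sin.differentiableAt.comp
      exact ((d1.sub (differentiableAt_const _)).const_mul _)
    have hd := hne w hw
    exact (d2.sub (differentiableAt_const _)).div (d2.add (differentiableAt_const _)) hd
  · -- bijection
    have hcomp := cayley_bijOn.comp (sin_bijOn.comp ((affine_bijOn a h ha hh).comp hψbij))
    have hfun : PhiMap α a h = ((fun ζ : ℂ => (ζ - Complex.I)/(ζ + Complex.I)) ∘ Complex.sin ∘
        (fun s : ℂ => (Real.pi : ℂ) * Complex.I / ((2*h : ℝ) : ℂ) * (s - (a:ℂ))) ∘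
        (fun w : ℂ => w ^ ((-(1/α) : ℝ) : ℂ))) := by
      funext w
      rfl
    rw [hfun]
    exact hcomp

end PhiAuxLemmas

/-- Under the hypotheses `α > 1`, `a,h > 0`, `α·arctan(h/a) < π` and
injectivity of the principal power `z ↦ z^α` on `T_{a,h}`, the map `Φ_{α,a,h}` is
well defined on `𝒬^{α,a,h}` (its denominator never vanishes), is holomorphic there,
maps `𝒬^{α,a,h}` bijectively onto the open unit disc, and sends the base point
`o_{α,a,h}` to `0`. -/
theorem PhiMap_biholomorphism (α a h : ℝ) (hα : 1 < α) (ha : 0 < a) (hh : 0 < h)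
    (harc : α * Real.arctan (h / a) < Real.pi)
    (hinj : Set.InjOn (fun z : ℂ => z ^ (α : ℂ)) (Tregion a h)) :
    (∀ w ∈ Qregion α a h,
      Complex.sin ((Real.pi * Complex.I / ((2 * h : ℝ) : ℂ)) *
          (w ^ ((-(1 / α) : ℝ) : ℂ) - (a : ℂ))) + Complex.I ≠ 0) ∧
    DifferentiableOn ℂ (PhiMap α a h) (Qregion α a h) ∧
    Set.BijOn (PhiMap α a h) (Qregion α a h) (Metric.ball (0 : ℂ) 1) ∧
    PhiMap α a h ((basePt α a h : ℝ) : ℂ) = 0 := by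
  exact PhiMap_biholomorphism_aux α a h hα ha hh harc
end

section
/- Let n ≥ 2, A > 0, C > 1 and p ∈ (1, 3/2). Let ψ : [0,A] → [0,∞) be continuous, continuously differentiable on (0,A), strictly increasing with ψ′ increasing on (0,A), and satisfy (1/C)·x^p ≤ ψ(x) ≤ C·x^p for all x ∈ [0,A]. On the open set U := { z ∈ ℂⁿ : 0 < Re z_n < A } define ρ(z) := (Im z_n)² + Σ_{j=1}^{n−1} |z_j|² − ψ(Re z_n)², and set D := { z ∈ U : ρ(z) < 0 }. Then { z ∈ U : ρ(z) = 0 } equals (frontier D) ∩ U, and at every point z of this set the (real) Fréchet derivative of ρ is nonzero. -/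
set_option maxHeartbeats 1000000

/-- Lemma 3.1(1) of the paper. Let `n ≥ 2`, `A > 0`, `C > 1`,
`p ∈ (1,3/2)`, and let `ψ : [0,A] → [0,∞)` be continuous, `C¹` on `(0,A)`, strictly
increasing with increasing derivative, and comparable to `x^p`. On
`U = { z ∈ ℂⁿ : 0 < Re z_n < A }` define
`ρ(z) = (Im z_n)² + ‖z′‖² − ψ(Re z_n)²` and `D = { z ∈ U : ρ(z) < 0 }`. Then
`{ z ∈ U : ρ(z) = 0 } = (frontier D) ∩ U`, and `ρ` has nonvanishing (real) Fréchet
derivative at every point of this set. -/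
theorem spike_defining_function (n : ℕ) (hn : 2 ≤ n) (A C p : ℝ) (hA : 0 < A) (hC : 1 < C)
    (hp : p ∈ Set.Ioo (1 : ℝ) (3 / 2)) (ψ : ℝ → ℝ)
    (hcont : ContinuousOn ψ (Set.Icc 0 A))
    (hC1 : ContDiffOn ℝ 1 ψ (Set.Ioo 0 A))
    (hmono : StrictMonoOn ψ (Set.Icc 0 A))
    (h'mono : MonotoneOn (deriv ψ) (Set.Ioo 0 A))
    (hbound : ∀ x ∈ Set.Icc (0 : ℝ) A, (1 / C) * x ^ p ≤ ψ x ∧ ψ x ≤ C * x ^ p) :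
    ∀ (U : Set (EuclideanSpace ℂ (Fin (n - 1)) × ℂ))
      (ρ : EuclideanSpace ℂ (Fin (n - 1)) × ℂ → ℝ)
      (D : Set (EuclideanSpace ℂ (Fin (n - 1)) × ℂ)),
      U = {z | 0 < z.2.re ∧ z.2.re < A} →
      ρ = (fun z => z.2.im ^ 2 + ‖z.1‖ ^ 2 - (ψ z.2.re) ^ 2) →
      D = {z ∈ U | ρ z < 0} →
      ({z ∈ U | ρ z = 0} = frontier D ∩ U ∧
        ∀ z ∈ U, ρ z = 0 → fderiv ℝ ρ z ≠ 0) := by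
  intro U ρ D hU hρ hD
  subst hU hρ hD
  set U : Set (EuclideanSpace ℂ (Fin (n - 1)) × ℂ) := {z | 0 < z.2.re ∧ z.2.re < A} with hU
  set ρ : EuclideanSpace ℂ (Fin (n - 1)) × ℂ → ℝ :=
    fun z => z.2.im ^ 2 + ‖z.1‖ ^ 2 - ψ z.2.re ^ 2 with hρ
  set D : Set (EuclideanSpace ℂ (Fin (n - 1)) × ℂ) := {z ∈ U | ρ z < 0} with hD
  -- ψ is positive on (0, A)
  have hψpos : ∀ x, 0 < x → x < A → 0 < ψ x := by
    intro x hx hxA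
    have h := (hbound x ⟨hx.le, hxA.le⟩).1
    have : 0 < (1 / C) * x ^ p := by
      apply mul_pos (by positivity) (Real.rpow_pos_of_pos hx p)
    linarith
  -- U is open
  have hUopen : IsOpen U := by
    rw [hU]
    have : {z : EuclideanSpace ℂ (Fin (n - 1)) × ℂ | 0 < z.2.re ∧ z.2.re < A} =
        (fun z : EuclideanSpace ℂ (Fin (n - 1)) × ℂ => z.2.re) ⁻¹' Set.Ioo 0 A := by
      ext z; simp [Set.mem_Ioo]
    rw [this]
    exact (Complex.continuous_re.comp continuous_snd).isOpen_preimage _ isOpen_Ioo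
  -- ρ is continuous at every point of U
  have hρcont : ∀ z ∈ U, ContinuousAt ρ z := by
    intro z hz
    rw [hU] at hz
    have hψat : ContinuousAt ψ z.2.re := by
      apply hcont.continuousAt
      exact Icc_mem_nhds hz.1 hz.2
    rw [hρ]
    apply ContinuousAt.sub
    · exact ((Complex.continuous_im.comp continuous_snd).continuousAt.pow 2).add
        ((continuous_fst.norm.pow 2).continuousAt)
    · have hin : ContinuousAt (fun w : EuclideanSpace ℂ (Fin (n-1)) × ℂ => w.2.re) z :=
        (Complex.continuous_re.comp continuous_snd).continuousAt
      exact (ContinuousAt.comp (g := ψ) (x := z) hψat hin).pow 2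
  -- D is open
  have hDopen : IsOpen D := by
    rw [hD]
    rw [isOpen_iff_mem_nhds]
    intro z hz
    have hzU : z ∈ U := hz.1
    have h1 : U ∈ nhds z := hUopen.mem_nhds hzU
    have h2 : {w | ρ w < 0} ∈ nhds z := by
      have := (hρcont z hzU).preimage_mem_nhds (Iio_mem_nhds hz.2)
      exact this
    filter_upwards [h1, h2] with w hw1 hw2
    exact ⟨hw1, hw2⟩
  -- every point of U with ρ = 0 is in the closure of D
  have hclos : ∀ z ∈ U, ρ z = 0 → z ∈ closure D := by
    intro z hz hz0
    rw [hU] at hz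
    have hψz : 0 < ψ z.2.re := hψpos _ hz.1 hz.2
    -- the path γ t = (t • z₁, re z₂ + t * im z₂ * I)
    set γ : ℝ → EuclideanSpace ℂ (Fin (n - 1)) × ℂ := fun t =>
      (t • z.1, (z.2.re : ℂ) + (t * z.2.im : ℝ) * Complex.I) with hγ
    have hγcont : Continuous γ := by
      apply Continuous.prodMk
      · exact continuous_id.smul continuous_const
      · continuity
    have hγ1 : γ 1 = z := by
      simp [hγ, Complex.ext_iff]
    have hγD : ∀ t ∈ Set.Ioo (0:ℝ) 1, γ t ∈ D := by
      intro t ht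
      have hre : (γ t).2.re = z.2.re := by simp [hγ]
      have him : (γ t).2.im = t * z.2.im := by simp [hγ]
      have hρz : z.2.im ^ 2 + ‖z.1‖ ^ 2 = ψ z.2.re ^ 2 := by
        have h0 : z.2.im ^ 2 + ‖z.1‖ ^ 2 - ψ z.2.re ^ 2 = 0 := hz0
        linarith
      have hρt : ρ (γ t) = t ^ 2 * (z.2.im ^ 2 + ‖z.1‖ ^ 2) - ψ z.2.re ^ 2 := by
        have hn1 : ‖(γ t).1‖ ^ 2 = t ^ 2 * ‖z.1‖ ^ 2 := by
          have h : ‖(γ t).1‖ = |t| * ‖z.1‖ := by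
            simp [hγ, norm_smul, Real.norm_eq_abs]
          rw [h, mul_pow, sq_abs]
        show (γ t).2.im ^ 2 + ‖(γ t).1‖ ^ 2 - ψ (γ t).2.re ^ 2 = _
        rw [hre, him, hn1]; ring
      have hρtneg : ρ (γ t) < 0 := by
        rw [hρt, hρz]
        have h1 : t ^ 2 < 1 := pow_lt_one₀ ht.1.le ht.2 two_ne_zero
        nlinarith [mul_pos (sub_pos.mpr h1) (pow_pos hψz 2)]
      refine ⟨?_, hρtneg⟩
      rw [hU]
      exact ⟨by rw [hre]; exact hz.1, by rw [hre]; exact hz.2⟩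
    -- take the limit t → 1⁻ along the path
    have h1mem : (1:ℝ) ∈ closure (Set.Ioo (0:ℝ) 1) := by
      rw [closure_Ioo one_ne_zero.symm]
      exact ⟨zero_le_one, le_refl 1⟩
    have : z ∈ γ '' closure (Set.Ioo (0:ℝ) 1) := ⟨1, h1mem, hγ1⟩
    have hsub := image_closure_subset_closure_image hγcont (s := Set.Ioo (0:ℝ) 1)
    have : z ∈ closure (γ '' Set.Ioo (0:ℝ) 1) := hsub this
    refine closure_mono ?_ this
    rintro w ⟨t, ht, rfl⟩
    exact hγD t ht
  -- the key fderiv computation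
  have hfd : ∀ z, z ∈ U → ρ z = 0 → fderiv ℝ ρ z ≠ 0 := by
    intro z hzU hz0
    have hz : 0 < z.2.re ∧ z.2.re < A := hzU
    have hψz : 0 < ψ z.2.re := hψpos _ hz.1 hz.2
    have hder : HasDerivAt ψ (deriv ψ z.2.re) z.2.re := by
      have hdiff : DifferentiableAt ℝ ψ z.2.re :=
        (hC1.differentiableOn one_ne_zero).differentiableAt
          (isOpen_Ioo.mem_nhds ⟨hz.1, hz.2⟩)
      exact hdiff.hasDerivAt
    have h_im : HasFDerivAt (fun w : EuclideanSpace ℂ (Fin (n - 1)) × ℂ => w.2.im)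
        (Complex.imCLM.comp (ContinuousLinearMap.snd ℝ (EuclideanSpace ℂ (Fin (n - 1))) ℂ)) z :=
      (Complex.imCLM.hasFDerivAt).comp z hasFDerivAt_snd
    have h_im2 := (hasDerivAt_pow 2 z.2.im).comp_hasFDerivAt z h_im
    have h_nsq : HasFDerivAt (fun w : EuclideanSpace ℂ (Fin (n - 1)) × ℂ => ‖w.1‖ ^ 2)
        (2 • (innerSL ℝ z.1).comp
          (ContinuousLinearMap.fst ℝ (EuclideanSpace ℂ (Fin (n - 1))) ℂ)) z :=
      hasFDerivAt_fst.norm_sq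
    have h_re : HasFDerivAt (fun w : EuclideanSpace ℂ (Fin (n - 1)) × ℂ => w.2.re)
        (Complex.reCLM.comp (ContinuousLinearMap.snd ℝ (EuclideanSpace ℂ (Fin (n - 1))) ℂ)) z :=
      (Complex.reCLM.hasFDerivAt).comp z hasFDerivAt_snd
    have h_ψ : HasFDerivAt (fun w : EuclideanSpace ℂ (Fin (n - 1)) × ℂ => ψ w.2.re)
        (deriv ψ z.2.re •
          (Complex.reCLM.comp (ContinuousLinearMap.snd ℝ (EuclideanSpace ℂ (Fin (n - 1))) ℂ))) z :=
      hder.comp_hasFDerivAt z h_re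
    have h_ψ2 := (hasDerivAt_pow 2 (ψ z.2.re)).comp_hasFDerivAt z h_ψ
    have htot : HasFDerivAt ρ
        (((2 : ℕ) * z.2.im ^ 1) •
            (Complex.imCLM.comp
              (ContinuousLinearMap.snd ℝ (EuclideanSpace ℂ (Fin (n - 1))) ℂ)) +
          2 • (innerSL ℝ z.1).comp
            (ContinuousLinearMap.fst ℝ (EuclideanSpace ℂ (Fin (n - 1))) ℂ) -
          ((2 : ℕ) * ψ z.2.re ^ 1) •
            (deriv ψ z.2.re •
              (Complex.reCLM.comp
                (ContinuousLinearMap.snd ℝ (EuclideanSpace ℂ (Fin (n - 1))) ℂ)))) z :=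
      (h_im2.add h_nsq).sub h_ψ2
    intro hzero
    set v : EuclideanSpace ℂ (Fin (n - 1)) × ℂ := (z.1, (z.2.im : ℂ) * Complex.I) with hv
    have heval : (fderiv ℝ ρ z) v = 0 := by rw [hzero]; rfl
    rw [htot.fderiv] at heval
    have him : ((z.2.im : ℂ) * Complex.I).im = z.2.im := by simp
    have hre2 : ((z.2.im : ℂ) * Complex.I).re = 0 := by simp
    simp only [ContinuousLinearMap.sub_apply, ContinuousLinearMap.add_apply,
      ContinuousLinearMap.smul_apply, ContinuousLinearMap.comp_apply,
      ContinuousLinearMap.coe_fst', ContinuousLinearMap.coe_snd',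
      Complex.imCLM_apply, Complex.reCLM_apply, innerSL_apply_apply, smul_eq_mul,
      hv, him, hre2] at heval
    have hip : (inner ℝ z.1 z.1 : ℝ) = ‖z.1‖ ^ 2 := real_inner_self_eq_norm_sq z.1
    have hρz : z.2.im ^ 2 + ‖z.1‖ ^ 2 = ψ z.2.re ^ 2 := by
      have h0 : z.2.im ^ 2 + ‖z.1‖ ^ 2 - ψ z.2.re ^ 2 = 0 := hz0
      linarith
    rw [hip] at heval
    simp only [smul_eq_mul, pow_one, mul_zero, sub_zero, nsmul_eq_mul, Nat.cast_ofNat] at heval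
    push_cast at heval
    nlinarith [pow_pos hψz 2, hρz, heval]
  constructor
  · ext z
    simp only [Set.mem_setOf_eq, Set.mem_inter_iff]
    constructor
    · rintro ⟨hzU, hz0⟩
      refine ⟨⟨hclos z hzU hz0, ?_⟩, hzU⟩
      rw [hDopen.interior_eq]
      intro hzD
      have : ρ z < 0 := hzD.2
      linarith [this, le_of_eq hz0.symm]
    · rintro ⟨hfr, hzU⟩
      refine ⟨hzU, ?_⟩
      have hcl : z ∈ closure D := hfr.1
      have hni : z ∉ D := by
        intro hzD
        exact hfr.2 (by rw [hDopen.interior_eq]; exact hzD)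
      have hle : ρ z ≤ 0 := by
        have hne : (nhdsWithin z D).NeBot := mem_closure_iff_nhdsWithin_neBot.mp hcl
        have htend : Filter.Tendsto ρ (nhdsWithin z D) (nhds (ρ z)) :=
          ((hρcont z hzU).continuousWithinAt).tendsto
        refine le_of_tendsto htend ?_
        filter_upwards [self_mem_nhdsWithin] with w hw
        exact le_of_lt hw.2
      rcases lt_or_eq_of_le hle with hlt | heq
      · exact absurd ⟨hzU, hlt⟩ hni
      · exact heq
  · exact hfd
end

section
/- Let n ≥ 2, A > 0, and let ψ : (0,A) → ℝ be twice continuously differentiable. On the open set U := { z ∈ ℂⁿ : 0 < Re z_n < A } define ρ(z) := (Im z_n)² + Σ_{j=1}^{n−1} |z_j|² − ψ(Re z_n)². Then ρ is twice (real) differentiable on U, and for every z ∈ U and every v = (v₁,…,v_n) ∈ ℂⁿ, writing x := Re z_n, one has (1/4)·( D²ρ(z)(v,v) + D²ρ(z)(iv,iv) ) = Σ_{j=1}^{n−1} |v_j|² + ( 1/2 − (1/2)·( ψ″(x)·ψ(x) + ψ′(x)² ) )·|v_n|², where D²ρ(z) denotes the second real Fréchet derivative of ρ at z (viewing ℂⁿ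 as a real vector space) and iv is the componentwise multiplication of v by i. -/
set_option maxHeartbeats 1000000

open ContinuousLinearMap

lemma spike_aux {E : Type*} [NormedAddCommGroup E] [InnerProductSpace ℝ E]
    {A : ℝ} {ψ : ℝ → ℝ} (hψ : ContDiffOn ℝ 2 ψ (Set.Ioo 0 A))
    (z : E × ℂ) (hz : z.2.re ∈ Set.Ioo 0 A) :
    (DifferentiableAt ℝ (fun z : E × ℂ => z.2.im ^ 2 + ‖z.1‖ ^ 2 - ψ z.2.re ^ 2) z ∧
      DifferentiableAt ℝ (fderiv ℝ fun z : E × ℂ => z.2.im ^ 2 + ‖z.1‖ ^ 2 - ψ z.2.re ^ 2) z) ∧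
    ∀ v w : E × ℂ,
      fderiv ℝ (fderiv ℝ fun z : E × ℂ => z.2.im ^ 2 + ‖z.1‖ ^ 2 - ψ z.2.re ^ 2) z v w
        = 2 * v.2.im * w.2.im + 2 * (inner ℝ v.1 w.1 : ℝ)
          - (2 * deriv ψ z.2.re * deriv ψ z.2.re
              + 2 * ψ z.2.re * deriv (deriv ψ) z.2.re) * (v.2.re * w.2.re) := by
  set ρ : E × ℂ → ℝ := fun z => z.2.im ^ 2 + ‖z.1‖ ^ 2 - ψ z.2.re ^ 2 with hρdef
  set L_im : (E × ℂ) →L[ℝ] ℝ := Complex.imCLM.comp (ContinuousLinearMap.snd ℝ E ℂ) with hLim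
  set L_re : (E × ℂ) →L[ℝ] ℝ := Complex.reCLM.comp (ContinuousLinearMap.snd ℝ E ℂ) with hLre
  set fstL : (E × ℂ) →L[ℝ] E := ContinuousLinearMap.fst ℝ E ℂ with hfstL
  have hψat : ∀ x ∈ Set.Ioo 0 A, DifferentiableAt ℝ ψ x := fun x hx =>
    (hψ.contDiffAt (isOpen_Ioo.mem_nhds hx)).differentiableAt two_ne_zero
  have hdd : ContDiffOn ℝ 1 (deriv ψ) (Set.Ioo 0 A) := by
    have := hψ.deriv_of_isOpen isOpen_Ioo (m := 1) (by norm_num)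
    exact this
  have hdψat : ∀ x ∈ Set.Ioo 0 A, DifferentiableAt ℝ (deriv ψ) x := fun x hx =>
    (hdd.contDiffAt (isOpen_Ioo.mem_nhds hx)).differentiableAt one_ne_zero
  set F : E × ℂ → ((E × ℂ) →L[ℝ] ℝ) := fun w =>
    (2 * w.2.im) • L_im + 2 • ((innerSL ℝ w.1).comp fstL)
      - (2 * ψ w.2.re * deriv ψ w.2.re) • L_re with hFdef
  have key : ∀ w : E × ℂ, w.2.re ∈ Set.Ioo 0 A → HasFDerivAt ρ (F w) w := by
    intro w hw
    have h1 : HasFDerivAt (fun z : E × ℂ => z.2.im ^ 2) ((2 * w.2.im) • L_im) w := by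
      have h := (hasDerivAt_pow 2 w.2.im).comp_hasFDerivAt w (L_im.hasFDerivAt (x := w))
      simp at h; exact h
    have h2 : HasFDerivAt (fun z : E × ℂ => ‖z.1‖ ^ 2)
        (2 • ((innerSL ℝ w.1).comp fstL)) w := by
      exact (fstL.hasFDerivAt (x := w)).norm_sq
    have hq : HasDerivAt (fun t => ψ t ^ 2) (2 * ψ w.2.re * deriv ψ w.2.re) w.2.re := by
      have h := (hψat _ hw).hasDerivAt.fun_pow 2
      simpa using h
    have h3 : HasFDerivAt (fun z : E × ℂ => ψ z.2.re ^ 2)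
        ((2 * ψ w.2.re * deriv ψ w.2.re) • L_re) w := by
      exact hq.comp_hasFDerivAt w (L_re.hasFDerivAt (x := w))
    exact (h1.add h2).sub h3
  have hsopen : IsOpen {w : E × ℂ | w.2.re ∈ Set.Ioo 0 A} :=
    isOpen_Ioo.preimage (Complex.continuous_re.comp continuous_snd)
  have hmem : {w : E × ℂ | w.2.re ∈ Set.Ioo 0 A} ∈ nhds z := hsopen.mem_nhds hz
  have heq : fderiv ℝ ρ =ᶠ[nhds z] F :=
    Filter.eventually_of_mem hmem fun w hw => (key w hw).fderiv
  -- second derivative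
  set c : ℝ := 2 * deriv ψ z.2.re * deriv ψ z.2.re + 2 * ψ z.2.re * deriv (deriv ψ) z.2.re
    with hcdef
  have hg' : HasDerivAt (fun t => 2 * ψ t * deriv ψ t) c z.2.re := by
    have h1 := ((hψat _ hz).hasDerivAt.const_mul 2).mul (hdψat _ hz).hasDerivAt
    have : 2 * deriv ψ z.2.re * deriv ψ z.2.re + 2 * ψ z.2.re * deriv (deriv ψ) z.2.re
        = 2 * deriv ψ z.2.re * deriv ψ z.2.re + (2 * ψ z.2.re) * deriv (deriv ψ) z.2.re := by ring
    rw [hcdef, this]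
    exact h1
  haveI hBS : IsBoundedSMul ℝ ((E × ℂ) →L[ℝ] ℝ) := @NormedSpace.toIsBoundedSMul ℝ ((E × ℂ) →L[ℝ] ℝ) _ _ _
  have S1 : HasFDerivAt (fun w : E × ℂ => (2 * w.2.im) • L_im)
      (((2:ℝ) • L_im).smulRight L_im) z :=
    ((L_im.hasFDerivAt (x := z)).const_mul (2:ℝ)).smul_const L_im
  have hlin : IsBoundedLinearMap ℝ (fun w : E × ℂ => 2 • ((innerSL ℝ w.1).comp fstL)) := by
    refine ⟨⟨fun a b => ?_, fun r a => ?_⟩, ⟨2, two_pos, fun w => ?_⟩⟩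
    · refine ContinuousLinearMap.ext fun y => ?_
      simp only [ContinuousLinearMap.smul_apply, ContinuousLinearMap.add_apply,
        ContinuousLinearMap.comp_apply, innerSL_apply_apply, Prod.fst_add, inner_add_left,
        two_smul, smul_eq_mul]
      ring
    · refine ContinuousLinearMap.ext fun y => ?_
      simp only [ContinuousLinearMap.smul_apply, ContinuousLinearMap.add_apply,
        ContinuousLinearMap.comp_apply, innerSL_apply_apply, Prod.smul_fst, inner_smul_left,
        two_smul, smul_eq_mul, RCLike.star_def, starRingEnd_apply, star_trivial]
      ring
    · have h1 : ‖(innerSL ℝ w.1).comp fstL‖ ≤ ‖w‖ := by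
        refine ContinuousLinearMap.opNorm_le_bound _ (norm_nonneg w) fun y => ?_
        have h2 := abs_real_inner_le_norm w.1 y.1
        have h3 : ‖w.1‖ ≤ ‖w‖ := norm_fst_le w
        have h4 : ‖y.1‖ ≤ ‖y‖ := norm_fst_le y
        simp only [ContinuousLinearMap.comp_apply, innerSL_apply_apply, Real.norm_eq_abs]
        calc |inner ℝ w.1 y.1| ≤ ‖w.1‖ * ‖y.1‖ := h2
          _ ≤ ‖w‖ * ‖y‖ := by
            apply mul_le_mul h3 h4 (norm_nonneg _) (norm_nonneg _)
      calc ‖2 • ((innerSL ℝ w.1).comp fstL)‖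
          = ‖(innerSL ℝ w.1).comp fstL + (innerSL ℝ w.1).comp fstL‖ := by rw [two_smul]
        _ ≤ ‖(innerSL ℝ w.1).comp fstL‖ + ‖(innerSL ℝ w.1).comp fstL‖ :=
            ContinuousLinearMap.opNorm_add_le _ _
        _ ≤ 2 * ‖w‖ := by linarith
  set M : (E × ℂ) →L[ℝ] ((E × ℂ) →L[ℝ] ℝ) := hlin.toContinuousLinearMap with hM
  have S2 : HasFDerivAt (fun w : E × ℂ => 2 • ((innerSL ℝ w.1).comp fstL)) M z := by
    exact hlin.toContinuousLinearMap.hasFDerivAt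
  have S3 : HasFDerivAt (fun w : E × ℂ => (2 * ψ w.2.re * deriv ψ w.2.re) • L_re)
      ((c • L_re).smulRight L_re) z := by
    have h := (hg'.comp_hasFDerivAt z (L_re.hasFDerivAt (x := z))).smul_const L_re
    exact h
  have hFto : HasFDerivAt F (((2:ℝ) • L_im).smulRight L_im + M
      - (c • L_re).smulRight L_re) z := by
    have h := @HasFDerivAt.sub ℝ _ (E × ℂ) _ _ ((E × ℂ) →L[ℝ] ℝ) _ _ _ _ _ _ z (S1.add S2) S3
    exact h
  refine ⟨⟨(key z hz).differentiableAt, hFto.differentiableAt.congr_of_eventuallyEq heq⟩, ?_⟩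
  intro v w
  rw [heq.fderiv_eq, hFto.fderiv]
  have hval : (M v) w = 2 * (inner ℝ v.1 w.1 : ℝ) := by
    have h0 : (M v) w = (2 • ((innerSL ℝ v.1).comp fstL)) w := by rw [hM]; rfl
    rw [h0]
    simp [two_smul, hfstL]
    ring
  simp only [ContinuousLinearMap.add_apply, ContinuousLinearMap.sub_apply,
    ContinuousLinearMap.smulRight_apply, ContinuousLinearMap.smul_apply, hLim, hLre, hfstL,
    ContinuousLinearMap.comp_apply, ContinuousLinearMap.coe_fst', ContinuousLinearMap.coe_snd',
    Complex.imCLM_apply, Complex.reCLM_apply, innerSL_apply_apply, smul_eq_mul, two_smul]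
  rw [hval]
  ring

/-- Lemma 3.1(2) of the paper. Let `n ≥ 2`, `A > 0`, and let
`ψ` be `C²` on `(0,A)`. On `U = { z : 0 < Re z_n < A }` define
`ρ(z) = (Im z_n)² + ‖z′‖² − ψ(Re z_n)²`. Then `ρ` is twice (real) differentiable on `U`,
and for all `z ∈ U` and all `v`, writing `x = Re z_n`,
`(1/4)·(D²ρ(z)(v,v) + D²ρ(z)(iv,iv))
  = ‖v′‖² + (1/2 − (1/2)(ψ″(x)ψ(x) + ψ′(x)²))·|v_n|²`. -/
theorem spike_levi_form (n : ℕ) (hn : 2 ≤ n) (A : ℝ) (hA : 0 < A) (ψ : ℝ → ℝ)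
    (hψ : ContDiffOn ℝ 2 ψ (Set.Ioo 0 A)) :
    ∀ (ρ : EuclideanSpace ℂ (Fin (n - 1)) × ℂ → ℝ),
      ρ = (fun z => z.2.im ^ 2 + ‖z.1‖ ^ 2 - (ψ z.2.re) ^ 2) →
      ∀ z : EuclideanSpace ℂ (Fin (n - 1)) × ℂ, 0 < z.2.re → z.2.re < A →
        (DifferentiableAt ℝ ρ z ∧ DifferentiableAt ℝ (fderiv ℝ ρ) z) ∧
        ∀ v : EuclideanSpace ℂ (Fin (n - 1)) × ℂ,
          (1 / 4) * (fderiv ℝ (fderiv ℝ ρ) z v v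
              + fderiv ℝ (fderiv ℝ ρ) z (Complex.I • v) (Complex.I • v))
            = ‖v.1‖ ^ 2
              + (1 / 2 - (1 / 2) * (deriv (deriv ψ) z.2.re * ψ z.2.re
                  + (deriv ψ z.2.re) ^ 2)) * ‖v.2‖ ^ 2 := by
  intro ρ hρ z hz1 hz2
  subst hρ
  obtain ⟨hdiff, hval⟩ := spike_aux hψ z ⟨hz1, hz2⟩
  refine ⟨hdiff, fun v => ?_⟩
  rw [hval v v, hval (Complex.I • v) (Complex.I • v)]
  have h1 : (Complex.I • v).1 = Complex.I • v.1 := rfl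
  have h2 : (Complex.I • v).2 = Complex.I * v.2 := rfl
  have hinn : (inner ℝ v.1 v.1 : ℝ) = ‖v.1‖ ^ 2 := real_inner_self_eq_norm_sq v.1
  have hinn2 : (inner ℝ (Complex.I • v).1 (Complex.I • v).1 : ℝ) = ‖v.1‖ ^ 2 := by
    rw [real_inner_self_eq_norm_sq, h1, norm_smul, Complex.norm_I, one_mul]
  rw [hinn, hinn2, h2]
  have him : (Complex.I * v.2).im = v.2.re := by simp
  have hre : (Complex.I * v.2).re = -v.2.im := by simp
  rw [him, hre, Complex.sq_norm, Complex.normSq_apply]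
  ring
end

section
/- Let A > 0, B ∈ (0,A), β > 0 and p ∈ (1, 3/2). Let ψ : (−A, β) → ℝ be twice continuously differentiable with ψ(t) = (t+A)^p for all t ∈ (−A, −B]. Then there exist C > 0 and δ ∈ (0, β) such that, defining ρ(z,w) := |z|² + (Im w)² − C·ψ(Re w)² on { (z,w) ∈ ℂ² : −A < Re w < β }, one has for every (z,w) with −A < Re w < δ and every v ∈ ℂ²: (1/4)·( D²ρ(z,w)(v,v) + D²ρ(z,w)(iv,iv) ) ≥ (1/4)·‖v‖², where D²ρ(z,w) is the second real Fréchet derivative of ρ at (z,w) and iv is componentwise multiplication of v by i. -/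
set_option maxHeartbeats 1000000

open Set Complex ContinuousLinearMap


/-- key computation of Section 3.1 of the paper. Let `A > 0`,
`B ∈ (0,A)`, `β > 0`, `p ∈ (1,3/2)`, and let `ψ` be `C²` on `(−A,β)` with
`ψ(t) = (t+A)^p` for `t ∈ (−A,−B]`. Then there exist `C > 0` and `δ ∈ (0,β)` such that
the function `ρ(z,w) = |z|² + (Im w)² − C·ψ(Re w)²` satisfies
`(1/4)·(D²ρ(z,w)(v,v) + D²ρ(z,w)(iv,iv)) ≥ (1/4)·‖v‖²` (Euclidean norm on `ℂ²`)
whenever `−A < Re w < δ`; i.e. `ρ` is strictly plurisubharmonic there. -/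
theorem single_spike_strictly_psh (A B β p : ℝ) (hA : 0 < A) (hB : 0 < B) (hBA : B < A)
    (hβ : 0 < β) (hp : p ∈ Set.Ioo (1 : ℝ) (3 / 2)) (ψ : ℝ → ℝ)
    (hψ : ContDiffOn ℝ 2 ψ (Set.Ioo (-A) β))
    (hval : ∀ t ∈ Set.Ioc (-A) (-B), ψ t = (t + A) ^ p) :
    ∃ C > (0 : ℝ), ∃ δ : ℝ, 0 < δ ∧ δ < β ∧
      ∀ (zw : ℂ × ℂ) (v : ℂ × ℂ), -A < zw.2.re → zw.2.re < δ →
        (1 / 4) * (‖v.1‖ ^ 2 + ‖v.2‖ ^ 2) ≤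
          (1 / 4) *
            (fderiv ℝ (fderiv ℝ (fun q : ℂ × ℂ =>
                ‖q.1‖ ^ 2 + q.2.im ^ 2 - C * (ψ q.2.re) ^ 2)) zw v v
              + fderiv ℝ (fderiv ℝ (fun q : ℂ × ℂ =>
                ‖q.1‖ ^ 2 + q.2.im ^ 2 - C * (ψ q.2.re) ^ 2)) zw
                  (Complex.I • v) (Complex.I • v)) := by
  obtain ⟨hp1, hp2⟩ := hp
  have hS : IsOpen (Ioo (-A) β) := isOpen_Ioo
  set g : ℝ → ℝ := fun t => ψ t ^ 2 with hgdef
  have hgC2 : ContDiffOn ℝ 2 g (Ioo (-A) β) := hψ.pow 2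
  set g1 := deriv g with hg1def
  set g2 := deriv g1 with hg2def
  have hd1 : ∀ t ∈ Ioo (-A) β, HasDerivAt g (g1 t) t := fun t ht =>
    (((hgC2.differentiableOn (by norm_num)).differentiableAt (hS.mem_nhds ht))).hasDerivAt
  have hg1C1 : ContDiffOn ℝ 1 g1 (Ioo (-A) β) := hgC2.deriv_of_isOpen hS (by norm_num)
  have hd2 : ∀ t ∈ Ioo (-A) β, HasDerivAt g1 (g2 t) t := fun t ht =>
    (((hg1C1.differentiableOn (by norm_num)).differentiableAt (hS.mem_nhds ht))).hasDerivAt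
  have hg2cont : ContinuousOn g2 (Ioo (-A) β) :=
    (hg1C1.deriv_of_isOpen (m := 0) hS (by norm_num)).continuousOn
  -- explicit formula for g1 and g2 on (-A, -B)
  have hJo : IsOpen (Ioo (-A) (-B)) := isOpen_Ioo
  have hgeq : ∀ s ∈ Ioo (-A) (-B), g s = (s + A) ^ (2 * p) := by
    intro s hs
    have hx : (0:ℝ) < s + A := by linarith [hs.1]
    have : ψ s = (s + A) ^ p := hval s ⟨hs.1, hs.2.le⟩
    simp only [hgdef, this, sq]
    rw [← Real.rpow_add hx]; ring_nf
  have hg1eq : ∀ t ∈ Ioo (-A) (-B), g1 t = 2 * p * (t + A) ^ (2 * p - 1) := by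
    intro t ht
    have hx : (0:ℝ) < t + A := by linarith [ht.1]
    have hev : g =ᶠ[nhds t] fun u => (u + A) ^ (2 * p) := by
      filter_upwards [hJo.mem_nhds ht] with s hs using hgeq s hs
    have hd : HasDerivAt (fun u : ℝ => (u + A) ^ (2 * p)) (2 * p * (t + A) ^ (2 * p - 1)) t := by
      have := (Real.hasDerivAt_rpow_const (p := 2 * p) (Or.inl hx.ne')).comp t
        ((hasDerivAt_id t).add_const A)
      simpa [Function.comp_def] using this
    rw [hg1def, hev.deriv_eq, hd.deriv]
  have hg2eq : ∀ t ∈ Ioo (-A) (-B), g2 t = 2 * p * (2 * p - 1) * (t + A) ^ (2 * p - 2) := by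
    intro t ht
    have hx : (0:ℝ) < t + A := by linarith [ht.1]
    have hev : g1 =ᶠ[nhds t] fun u => 2 * p * (u + A) ^ (2 * p - 1) := by
      filter_upwards [hJo.mem_nhds ht] with s hs using hg1eq s hs
    have hd : HasDerivAt (fun u : ℝ => 2 * p * (u + A) ^ (2 * p - 1))
        (2 * p * (2 * p - 1) * (t + A) ^ (2 * p - 2)) t := by
      have := (((Real.hasDerivAt_rpow_const (p := 2 * p - 1) (Or.inl hx.ne')).comp t
        ((hasDerivAt_id t).add_const A)).const_mul (2 * p))
      have h21 : 2 * p - 1 - 1 = 2 * p - 2 := by ring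
      simpa [h21, mul_assoc] using this
    rw [hg2def, hev.deriv_eq, hd.deriv]
  -- bound for g2 on (-A, β/2)
  obtain ⟨M, hM⟩ := (isCompact_Icc : IsCompact (Icc (-B) (β / 2))).exists_bound_of_continuousOn
    (hg2cont.mono (fun t ht => ⟨by linarith [ht.1], by linarith [ht.2]⟩))
  set K : ℝ := max (2 * p * (2 * p - 1) * A ^ (2 * p - 2)) (max M 0) + 1 with hKdef
  have hK1 : (1:ℝ) ≤ K := by
    have := le_max_right M 0
    have := le_max_right (2 * p * (2 * p - 1) * A ^ (2 * p - 2)) (max M 0)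
    simp only [hKdef]; linarith [le_max_right (2 * p * (2 * p - 1) * A ^ (2 * p - 2)) (max M 0),
      le_max_right M 0]
  have hK0 : (0:ℝ) < K := by linarith
  have hg2bd : ∀ t ∈ Ioo (-A) (β / 2), g2 t ≤ K := by
    intro t ht
    rcases lt_or_ge t (-B) with h | h
    · rw [hg2eq t ⟨ht.1, h⟩]
      have hx : (0:ℝ) < t + A := by linarith [ht.1]
      have hle : (t + A) ^ (2 * p - 2) ≤ A ^ (2 * p - 2) :=
        Real.rpow_le_rpow hx.le (by linarith) (by linarith)
      have hc : (0:ℝ) ≤ 2 * p * (2 * p - 1) := by nlinarith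
      calc 2 * p * (2 * p - 1) * (t + A) ^ (2 * p - 2)
          ≤ 2 * p * (2 * p - 1) * A ^ (2 * p - 2) := by nlinarith
        _ ≤ K := by
            simp only [hKdef]
            linarith [le_max_left (2 * p * (2 * p - 1) * A ^ (2 * p - 2)) (max M 0)]
    · have := hM t ⟨h, ht.2.le⟩
      have h2 : g2 t ≤ M := (le_abs_self _).trans (by simpa [Real.norm_eq_abs] using this)
      simp only [hKdef]
      linarith [le_max_right (2 * p * (2 * p - 1) * A ^ (2 * p - 2)) (max M 0), le_max_left M 0]
  set C0 : ℝ := 1 / K with hC0def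
  have hC0 : 0 < C0 := by positivity
  have hCg : ∀ t ∈ Ioo (-A) (β / 2), C0 * g2 t ≤ 1 := by
    intro t ht
    have h := hg2bd t ht
    rw [hC0def, div_mul_eq_mul_div, one_mul, div_le_one hK0]
    exact h
  refine ⟨C0, hC0, β / 2, by linarith, by linarith, ?_⟩
  intro zw v hzw1 hzw2
  -- the CLM coordinate functionals
  set L1 : (ℂ × ℂ) →L[ℝ] ℝ := Complex.reCLM.comp (ContinuousLinearMap.fst ℝ ℂ ℂ) with hL1
  set L2 : (ℂ × ℂ) →L[ℝ] ℝ := Complex.imCLM.comp (ContinuousLinearMap.fst ℝ ℂ ℂ) with hL2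
  set L3 : (ℂ × ℂ) →L[ℝ] ℝ := Complex.reCLM.comp (ContinuousLinearMap.snd ℝ ℂ ℂ) with hL3
  set L4 : (ℂ × ℂ) →L[ℝ] ℝ := Complex.imCLM.comp (ContinuousLinearMap.snd ℝ ℂ ℂ) with hL4
  set ρ : (ℂ × ℂ) → ℝ := fun q => ‖q.1‖ ^ 2 + q.2.im ^ 2 - C0 * (ψ q.2.re) ^ 2
    with hρdef
  have hρeq : ρ = fun q => (L1 q) ^ 2 + (L2 q) ^ 2 + (L4 q) ^ 2 - C0 * g (L3 q) := by
    funext q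
    simp only [hρdef, hgdef, hL1, hL2, hL3, hL4, ContinuousLinearMap.comp_apply,
      ContinuousLinearMap.coe_fst', ContinuousLinearMap.coe_snd', Complex.reCLM_apply,
      Complex.imCLM_apply, Complex.sq_norm, Complex.normSq_apply]
    ring
  set Φ : (ℂ × ℂ) → ((ℂ × ℂ) →L[ℝ] ℝ) := fun q =>
    (2 * L1 q) • L1 + (2 * L2 q) • L2 + (2 * L4 q) • L4 - (C0 * g1 (L3 q)) • L3 with hΦdef
  have hU : IsOpen {q : ℂ × ℂ | q.2.re ∈ Ioo (-A) β} :=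
    hS.preimage (Complex.continuous_re.comp (continuous_snd))
  have hρderiv : ∀ q : ℂ × ℂ, q.2.re ∈ Ioo (-A) β → HasFDerivAt ρ (Φ q) q := by
    intro q hq
    rw [hρeq]
    have h1 : HasFDerivAt (fun q : ℂ × ℂ => (L1 q) ^ 2) ((2 * L1 q) • L1) q := by
      have := (hasDerivAt_pow 2 (L1 q)).comp_hasFDerivAt q L1.hasFDerivAt
      simpa [pow_one, Function.comp_def] using this
    have h2 : HasFDerivAt (fun q : ℂ × ℂ => (L2 q) ^ 2) ((2 * L2 q) • L2) q := by
      have := (hasDerivAt_pow 2 (L2 q)).comp_hasFDerivAt q L2.hasFDerivAt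
      simpa [pow_one, Function.comp_def] using this
    have h4 : HasFDerivAt (fun q : ℂ × ℂ => (L4 q) ^ 2) ((2 * L4 q) • L4) q := by
      have := (hasDerivAt_pow 2 (L4 q)).comp_hasFDerivAt q L4.hasFDerivAt
      simpa [pow_one, Function.comp_def] using this
    have hL3q : L3 q = q.2.re := rfl
    have h3 : HasFDerivAt (fun q : ℂ × ℂ => C0 * g (L3 q)) ((C0 * g1 (L3 q)) • L3) q := by
      have := ((hd1 (L3 q) (by rwa [hL3q])).comp_hasFDerivAt q L3.hasFDerivAt).const_mul C0
      simpa [smul_smul, Function.comp] using this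
    exact ((h1.add h2).add h4).sub h3
  have ht0 : zw.2.re ∈ Ioo (-A) β := ⟨hzw1, by linarith⟩
  set D : (ℂ × ℂ) →L[ℝ] ((ℂ × ℂ) →L[ℝ] ℝ) :=
    (((2:ℝ) • L1).smulRight L1 + ((2:ℝ) • L2).smulRight L2 + ((2:ℝ) • L4).smulRight L4)
      - ((C0 * g2 zw.2.re) • L3).smulRight L3 with hDdef
  have hΦderiv : HasFDerivAt Φ D zw := by
    have h1 : HasFDerivAt (fun q : ℂ × ℂ => (2 * L1 q) • L1) (((2:ℝ) • L1).smulRight L1) zw :=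
      (L1.hasFDerivAt.const_mul (2:ℝ)).smul_const L1
    have h2 : HasFDerivAt (fun q : ℂ × ℂ => (2 * L2 q) • L2) (((2:ℝ) • L2).smulRight L2) zw :=
      (L2.hasFDerivAt.const_mul (2:ℝ)).smul_const L2
    have h4 : HasFDerivAt (fun q : ℂ × ℂ => (2 * L4 q) • L4) (((2:ℝ) • L4).smulRight L4) zw :=
      (L4.hasFDerivAt.const_mul (2:ℝ)).smul_const L4
    have hc : HasFDerivAt (fun q : ℂ × ℂ => C0 * g1 (L3 q)) ((C0 * g2 zw.2.re) • L3) zw := by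
      have := ((hd2 (L3 zw) (by rwa [show L3 zw = zw.2.re from rfl])).comp_hasFDerivAt zw
        L3.hasFDerivAt).const_mul C0
      simpa [smul_smul, Function.comp, show L3 zw = zw.2.re from rfl] using this
    have h3 : HasFDerivAt (fun q : ℂ × ℂ => (C0 * g1 (L3 q)) • L3)
        (((C0 * g2 zw.2.re) • L3).smulRight L3) zw := hc.smul_const L3
    exact ((h1.add h2).add h4).sub h3
  have hfd2 : fderiv ℝ (fderiv ℝ ρ) zw = D := by
    have heq : fderiv ℝ ρ =ᶠ[nhds zw] Φ := by
      filter_upwards [hU.mem_nhds ht0] with q hq using (hρderiv q hq).fderiv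
    rw [heq.fderiv_eq, hΦderiv.fderiv]
  rw [hfd2]
  have hL1v : ∀ w : ℂ × ℂ, L1 w = w.1.re := fun _ => rfl
  have hL2v : ∀ w : ℂ × ℂ, L2 w = w.1.im := fun _ => rfl
  have hL3v : ∀ w : ℂ × ℂ, L3 w = w.2.re := fun _ => rfl
  have hL4v : ∀ w : ℂ × ℂ, L4 w = w.2.im := fun _ => rfl
  have hDvv : ∀ w : ℂ × ℂ, D w w =
      2 * w.1.re ^ 2 + 2 * w.1.im ^ 2 + 2 * w.2.im ^ 2
        - C0 * g2 zw.2.re * w.2.re ^ 2 := by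
    intro w
    simp only [hDdef, ContinuousLinearMap.sub_apply, ContinuousLinearMap.add_apply,
      ContinuousLinearMap.smulRight_apply, ContinuousLinearMap.smul_apply, hL1v, hL2v, hL3v, hL4v,
      smul_eq_mul]
    ring
  have hIv1 : (Complex.I • v).1.re = -v.1.im ∧ (Complex.I • v).1.im = v.1.re ∧
      (Complex.I • v).2.re = -v.2.im ∧ (Complex.I • v).2.im = v.2.re := by
    simp [Prod.smul_fst, Prod.smul_snd, smul_eq_mul, Complex.mul_re, Complex.mul_im]
  obtain ⟨hi1, hi2, hi3, hi4⟩ := hIv1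
  rw [hDvv v, hDvv (Complex.I • v), hi1, hi2, hi3, hi4]
  have hkey : C0 * g2 zw.2.re ≤ 1 := hCg zw.2.re ⟨hzw1, hzw2⟩
  have hv1 : ‖v.1‖ ^ 2 = v.1.re ^ 2 + v.1.im ^ 2 := by
    rw [Complex.sq_norm, Complex.normSq_apply]; ring
  have hv2 : ‖v.2‖ ^ 2 = v.2.re ^ 2 + v.2.im ^ 2 := by
    rw [Complex.sq_norm, Complex.normSq_apply]; ring
  rw [hv1, hv2]
  have e1 : C0 * g2 zw.2.re * v.2.re ^ 2 ≤ v.2.re ^ 2 := by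
    have := mul_le_mul_of_nonneg_right hkey (sq_nonneg v.2.re); linarith
  have e2 : C0 * g2 zw.2.re * v.2.im ^ 2 ≤ v.2.im ^ 2 := by
    have := mul_le_mul_of_nonneg_right hkey (sq_nonneg v.2.im); linarith
  simp only [neg_sq]
  linarith [e1, e2, sq_nonneg v.1.re, sq_nonneg v.1.im]
end
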